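/- arXiv:2104.12588 — 9 statements merged into one kernel-verified Lean document; each statement's English description precedes it below -/
import Mathlib

section
/- Let D : Fin N → Fin k → Fin s be an N-run, k-factor, s-level factorial design with s ≥ 2, and let 1 ≤ t ≤ k with s^t dividing N. For each column j and each level r ∈ {0,…,s−2} define the indicator column y'_{j,r} : Fin N → ℤ by y'_{j,r}(i) = 1 if D i j = r and y'_{j,r}(i) = 0 otherwise. Then D is an OA(N,k,s,t) if and only if for every q with 1 ≤ q ≤ t, every choice of q pairwise distinct columns j₁,…,j_q, and every choice of levels r₁,…,r_q ∈ {0,…,s−2}, one has Σ_{i : Fin N} y'_{j₁,r₁}(i) · y'_{j₂,r₂}(i) ⋯ y'_{j_q,r_q}(i) = N / s^q. -/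
/-- `D` is an orthogonal array OA(N,k,s,t): for every `t`-element set `T` of columns
and every assignment `f` of levels to columns, the number of rows matching `f` on `T`
equals `N / s^t` (equivalently, the count times `s^t` equals `N`). -/
def isOA (N k s t : ℕ) (D : Fin N → Fin k → Fin s) : Prop :=
  ∀ T : Finset (Fin k), T.card = t → ∀ f : Fin k → Fin s,
    (Finset.univ.filter (fun i : Fin N => ∀ j ∈ T, D i j = f j)).card * s ^ t = N


/-- count of rows matching `lev` on columns `cols` -/
def cnt {N k s : ℕ} (D : Fin N → Fin k → Fin s) {q : ℕ}
    (cols : Fin q → Fin k) (lev : Fin q → Fin s) : ℕ :=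
  (Finset.univ.filter (fun i : Fin N => ∀ m, D i (cols m) = lev m)).card

lemma cnt_split {N k s q : ℕ} (D : Fin N → Fin k → Fin s)
    (cols : Fin (q+1) → Fin k) (m₀ : Fin (q+1)) (lev : Fin (q+1) → Fin s) :
    cnt D (cols ∘ m₀.succAbove) (lev ∘ m₀.succAbove)
      = ∑ r : Fin s, cnt D cols (Function.update lev m₀ r) := by
  unfold cnt
  rw [Finset.card_eq_sum_card_fiberwise
    (f := fun i => D i (cols m₀)) (t := Finset.univ) (fun x _ => Finset.mem_univ _)]
  refine Finset.sum_congr rfl fun r _ => ?_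
  rw [Finset.filter_filter]
  congr 1
  ext i
  simp only [Finset.mem_filter, Finset.mem_univ, true_and]
  rw [Fin.forall_iff_succAbove m₀ (P := fun m => D i (cols m) = Function.update lev m₀ r m)]
  simp only [Function.update_self, Function.comp]
  constructor
  · rintro ⟨h1, h2⟩
    exact ⟨h2, fun m => by rw [Function.update_of_ne (Fin.succAbove_ne m₀ m)]; exact h1 m⟩
  · rintro ⟨h2, h1⟩
    exact ⟨fun m => by have := h1 m; rwa [Function.update_of_ne (Fin.succAbove_ne m₀ m)] at this, h2⟩

lemma cnt_down {N k s q : ℕ} (hs : 0 < s) (hqk : q + 1 ≤ k) (D : Fin N → Fin k → Fin s)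
    (H : ∀ cols : Fin (q+1) → Fin k, Function.Injective cols →
      ∀ lev : Fin (q+1) → Fin s, cnt D cols lev * s ^ (q+1) = N)
    (cols : Fin q → Fin k) (hinj : Function.Injective cols)
    (lev : Fin q → Fin s) : cnt D cols lev * s ^ q = N := by
  -- find a fresh column
  have hcard : (Finset.univ.image cols).card < k := by
    calc (Finset.univ.image cols).card ≤ (Finset.univ : Finset (Fin q)).card :=
          Finset.card_image_le
      _ = q := by simp
      _ < k := by omega
  obtain ⟨j, hj⟩ : ∃ j : Fin k, j ∉ Finset.univ.image cols := by
    by_contra h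
    push_neg at h
    have : (Finset.univ : Finset (Fin k)) ⊆ Finset.univ.image cols := fun x _ => h x
    have := Finset.card_le_card this
    simp at this
    omega
  have hjr : j ∉ Set.range cols := by
    rintro ⟨m, rfl⟩
    exact hj (Finset.mem_image_of_mem cols (Finset.mem_univ m))
  set z : Fin s := ⟨0, hs⟩
  have hsplit := cnt_split D (Fin.cons j cols) 0 (Fin.cons z lev)
  have hc : (Fin.cons j cols : Fin (q+1) → Fin k) ∘ (0 : Fin (q+1)).succAbove = cols := by
    funext m; simp [Fin.zero_succAbove]
  have hl : (Fin.cons z lev : Fin (q+1) → Fin s) ∘ (0 : Fin (q+1)).succAbove = lev := by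
    funext m; simp [Fin.zero_succAbove]
  rw [hc, hl] at hsplit
  have hinj' : Function.Injective (Fin.cons j cols : Fin (q+1) → Fin k) :=
    Fin.cons_injective_iff.mpr ⟨hjr, hinj⟩
  have key : cnt D cols lev * s ^ (q+1) = s * N := by
    rw [hsplit, Finset.sum_mul]
    rw [Finset.sum_congr rfl (fun r _ => H _ hinj' (Function.update (Fin.cons z lev) 0 r))]
    simp [mul_comm]
  have : cnt D cols lev * s ^ q * s = N * s := by
    rw [mul_assoc, ← pow_succ, key, mul_comm]
  exact Nat.eq_of_mul_eq_mul_right hs this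

lemma sum_eq_cnt {N k s q : ℕ} (D : Fin N → Fin k → Fin s)
    (cols : Fin q → Fin k) (lev : Fin q → Fin s) :
    (∑ i : Fin N, ∏ m : Fin q, (if D i (cols m) = lev m then (1 : ℤ) else 0))
      = (cnt D cols lev : ℤ) := by
  unfold cnt
  have : ∀ i : Fin N, (∏ m : Fin q, (if D i (cols m) = lev m then (1 : ℤ) else 0))
      = if (∀ m, D i (cols m) = lev m) then 1 else 0 := by
    intro i
    rw [Finset.prod_boole]
    simp
  rw [Finset.sum_congr rfl (fun i _ => this i), Finset.sum_boole]

lemma cnt_full {N k s t : ℕ} (hs : 2 ≤ s) (htk : t ≤ k) (D : Fin N → Fin k → Fin s)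
    (R : ∀ q, 1 ≤ q → q ≤ t → ∀ cols : Fin q → Fin k, Function.Injective cols →
      ∀ lev : Fin q → Fin s, (∀ m, (lev m : ℕ) < s - 1) → cnt D cols lev * s ^ q = N) :
    ∀ q, q ≤ t → ∀ cols : Fin q → Fin k, Function.Injective cols →
      ∀ lev : Fin q → Fin s, cnt D cols lev * s ^ q = N := by
  intro q
  induction q with
  | zero =>
    intro _ cols _ lev
    unfold cnt
    simp [Finset.filter_true_of_mem]
  | succ q ih =>
    intro hq cols hinj lev
    set last : Fin s := ⟨s - 1, by omega⟩ with hlast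
    -- inner induction on the number of coordinates at level `last`
    have main : ∀ n (lev : Fin (q+1) → Fin s),
        (Finset.univ.filter (fun m => lev m = last)).card = n →
        cnt D cols lev * s ^ (q+1) = N := by
      intro n
      induction n with
      | zero =>
        intro lev hn
        refine R (q+1) (by omega) hq cols hinj lev fun m => ?_
        have hne : lev m ≠ last := by
          intro h
          have : m ∈ Finset.univ.filter (fun m => lev m = last) := by simp [h]
          rw [Finset.card_eq_zero] at hn
          simp [hn] at this
        have h1 : (lev m : ℕ) < s := (lev m).isLt
        have h2 : (lev m : ℕ) ≠ s - 1 := by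
          intro h
          apply hne
          apply Fin.ext
          simpa using h
        omega
      | succ n ihn =>
        intro lev hn
        obtain ⟨m₀, hm₀⟩ : ∃ m₀, m₀ ∈ Finset.univ.filter (fun m => lev m = last) := by
          apply Finset.card_pos.mp
          omega
        have hm₀' : lev m₀ = last := (Finset.mem_filter.mp hm₀).2
        have hsplit := cnt_split D cols m₀ lev
        -- drop term
        have hdrop : cnt D (cols ∘ m₀.succAbove) (lev ∘ m₀.succAbove) * s ^ q = N :=
          ih (by omega) _ (hinj.comp (Fin.succAbove_right_injective)) _
        -- sum split at `last`
        have hsum : ∑ r : Fin s, cnt D cols (Function.update lev m₀ r)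
            = cnt D cols lev + ∑ r ∈ Finset.univ.erase last, cnt D cols (Function.update lev m₀ r) := by
          rw [← Finset.add_sum_erase _ _ (Finset.mem_univ last)]
          congr 2
          rw [← hm₀', Function.update_eq_self]
        -- each erased term
        have herase : ∀ r ∈ Finset.univ.erase last,
            cnt D cols (Function.update lev m₀ r) * s ^ (q+1) = N := by
          intro r hr
          have hrne : r ≠ last := (Finset.mem_erase.mp hr).1
          refine ihn (Function.update lev m₀ r) ?_
          have hset : Finset.univ.filter (fun m => Function.update lev m₀ r m = last)
              = (Finset.univ.filter (fun m => lev m = last)).erase m₀ := by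
            ext m
            simp only [Finset.mem_filter, Finset.mem_univ, true_and, Finset.mem_erase]
            by_cases hm : m = m₀
            · subst hm
              simp [Function.update_self, hrne]
            · rw [Function.update_of_ne hm]
              tauto
          rw [hset, Finset.card_erase_of_mem hm₀, hn]
          omega
        have e1 : N * s = cnt D cols lev * s ^ (q+1) + (s - 1) * N := by
          calc N * s = cnt D (cols ∘ m₀.succAbove) (lev ∘ m₀.succAbove) * s ^ q * s := by
                rw [hdrop]
            _ = cnt D (cols ∘ m₀.succAbove) (lev ∘ m₀.succAbove) * s ^ (q+1) := by ring
            _ = (∑ r : Fin s, cnt D cols (Function.update lev m₀ r)) * s ^ (q+1) := by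
                rw [hsplit]
            _ = cnt D cols lev * s ^ (q+1)
                + (∑ r ∈ Finset.univ.erase last, cnt D cols (Function.update lev m₀ r)) * s ^ (q+1) := by
                rw [hsum, add_mul]
            _ = cnt D cols lev * s ^ (q+1)
                + ∑ r ∈ Finset.univ.erase last, cnt D cols (Function.update lev m₀ r) * s ^ (q+1) := by
                rw [Finset.sum_mul]
            _ = cnt D cols lev * s ^ (q+1) + ∑ _r ∈ Finset.univ.erase last, N := by
                rw [Finset.sum_congr rfl herase]
            _ = cnt D cols lev * s ^ (q+1) + (s - 1) * N := by
                rw [Finset.sum_const, Finset.card_erase_of_mem (Finset.mem_univ last)]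
                simp [mul_comm]
        have e2 : N * s = N + (s - 1) * N := by
          have h1 : 1 + (s - 1) = s := by omega
          calc N * s = N * (1 + (s - 1)) := by rw [h1]
            _ = N + (s - 1) * N := by ring
        omega
    exact main _ lev rfl

lemma isOA_iff_cnt {N k s t : ℕ} (hs : 2 ≤ s) (D : Fin N → Fin k → Fin s) :
    isOA N k s t D ↔
      ∀ cols : Fin t → Fin k, Function.Injective cols →
        ∀ lev : Fin t → Fin s, cnt D cols lev * s ^ t = N := by
  constructor
  · intro hOA cols hinj lev
    classical
    set f : Fin k → Fin s := fun j =>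
      if h : ∃ m, cols m = j then lev h.choose else ⟨0, by omega⟩ with hf
    have hfc : ∀ m, f (cols m) = lev m := by
      intro m
      have h : ∃ m', cols m' = cols m := ⟨m, rfl⟩
      have : f (cols m) = lev h.choose := dif_pos h
      rw [this, hinj h.choose_spec]
    have hT : (Finset.univ.image cols).card = t := by
      rw [Finset.card_image_of_injective _ hinj, Finset.card_univ, Fintype.card_fin]
    have hmain := hOA (Finset.univ.image cols) hT f
    unfold cnt
    have hset : Finset.filter (fun i : Fin N => ∀ m, D i (cols m) = lev m) Finset.univ
        = Finset.filter (fun i : Fin N => ∀ j ∈ Finset.univ.image cols, D i j = f j)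
          Finset.univ := by
      ext i
      simp only [Finset.mem_filter, Finset.mem_univ, true_and]
      rw [iff_comm]
      constructor
      · intro h m
        rw [← hfc m]
        exact h (cols m) (Finset.mem_image_of_mem cols (Finset.mem_univ m))
      · intro h j hj
        obtain ⟨m, _, rfl⟩ := Finset.mem_image.mp hj
        rw [hfc m]
        exact h m
    rw [hset]
    exact hmain
  · intro H T hT f
    set e := T.orderIsoOfFin hT with he
    set cols : Fin t → Fin k := fun m => (e m : Fin k) with hcols
    have hinj : Function.Injective cols := by
      intro a b hab
      exact e.injective (Subtype.ext hab)
    have hmain := H cols hinj (fun m => f (cols m))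
    unfold cnt at hmain
    have hset : Finset.filter (fun i : Fin N => ∀ j ∈ T, D i j = f j) Finset.univ
        = Finset.filter (fun i : Fin N => ∀ m, D i (cols m) = f (cols m)) Finset.univ := by
      ext i
      simp only [Finset.mem_filter, Finset.mem_univ, true_and]
      constructor
      · intro h m
        exact h (cols m) (e m).2
      · intro h j hj
        have : j = cols (e.symm ⟨j, hj⟩) := by
          simp [hcols]
        rw [this]
        exact h _
    rw [hset]
    exact hmain

theorem stmt0 (N k s t : ℕ) (hs : 2 ≤ s) (ht1 : 1 ≤ t) (htk : t ≤ k)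
    (hdvd : s ^ t ∣ N) (D : Fin N → Fin k → Fin s) :
    isOA N k s t D ↔
      ∀ q : ℕ, 1 ≤ q → q ≤ t →
        ∀ cols : Fin q → Fin k, Function.Injective cols →
          ∀ lev : Fin q → Fin s, (∀ m, (lev m : ℕ) < s - 1) →
            (∑ i : Fin N, ∏ m : Fin q,
                (if D i (cols m) = lev m then (1 : ℤ) else 0)) = (N / s ^ q : ℕ) := by
  have hs0 : 0 < s := by omega
  constructor
  · intro hOA q hq1 hqt cols hinj lev _
    have down : ∀ d q', q' + d = t → ∀ cols' : Fin q' → Fin k, Function.Injective cols' →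
        ∀ lev' : Fin q' → Fin s, cnt D cols' lev' * s ^ q' = N := by
      intro d
      induction d with
      | zero =>
        intro q' hq' cols' hinj' lev'
        have hqt' : q' = t := by omega
        subst hqt'
        exact (isOA_iff_cnt hs D).mp hOA cols' hinj' lev'
      | succ d ihd =>
        intro q' hq' cols' hinj' lev'
        exact cnt_down hs0 (by omega) D
          (fun c hc l => ihd (q' + 1) (by omega) c hc l) cols' hinj' lev'
    have key := down (t - q) q (by omega) cols hinj lev
    rw [sum_eq_cnt]
    have hdiv : N / s ^ q = cnt D cols lev :=
      Nat.div_eq_of_eq_mul_left (pow_pos hs0 q) key.symm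
    rw [hdiv]
  · intro h
    rw [isOA_iff_cnt hs D]
    intro cols hinj lev
    refine cnt_full hs htk D ?_ t le_rfl cols hinj lev
    intro q hq1 hqt cols' hinj' lev' hlev'
    have hq := h q hq1 hqt cols' hinj' lev' hlev'
    rw [sum_eq_cnt] at hq
    have hcnt : cnt D cols' lev' = N / s ^ q := by exact_mod_cast hq
    rw [hcnt, Nat.div_mul_cancel (dvd_trans (pow_dvd_pow s hqt) hdvd)]
end

section
/- Let Y be a two-level ±1 design that is an OA(N,k,2,t) with N = λ·2^t and k ≥ t + 2. Then for every nonempty subset l ⊆ Fin k, the J-characteristic J(l) is divisible by 2^t, i.e., J(l) = μ_l · 2^t for some integer μ_l. -/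
/-- All entries of `Y` are `1` or `-1`. -/
def isPM {N k : ℕ} (Y : Fin N → Fin k → ℤ) : Prop :=
  ∀ i j, Y i j = 1 ∨ Y i j = -1

/-- `Y` is a two-level orthogonal array OA(N,k,2,t): for every `t`-element set `T` of
columns and every `±1` sign pattern `ε`, the number of rows matching `ε` on `T`
equals `N / 2^t` (equivalently, the count times `2^t` equals `N`). -/
def isOA2 (N k t : ℕ) (Y : Fin N → Fin k → ℤ) : Prop :=
  ∀ T : Finset (Fin k), T.card = t →
    ∀ ε : Fin k → ℤ, (∀ j, ε j = 1 ∨ ε j = -1) →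
      (Finset.univ.filter (fun i : Fin N => ∀ j ∈ T, Y i j = ε j)).card * 2 ^ t = N

/-- The `J`-characteristic of the set of columns `l`. -/
def Jchar {N k : ℕ} (Y : Fin N → Fin k → ℤ) (l : Finset (Fin k)) : ℤ :=
  ∑ i : Fin N, ∏ j ∈ l, Y i j

open Finset

/-- Strength reduction: counts for sets of at most `t` columns. -/
lemma countA {N k t : ℕ} (Y : Fin N → Fin k → ℤ) (hpm : isPM Y) (hoa : isOA2 N k t Y)
    (htk : t ≤ k) :
    ∀ m (s : Finset (Fin k)), s.card + m = t →
      ∀ ε : Fin k → ℤ, (∀ j, ε j = 1 ∨ ε j = -1) →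
      (Finset.univ.filter (fun i : Fin N => ∀ j ∈ s, Y i j = ε j)).card * 2 ^ s.card = N := by
  intro m
  induction m with
  | zero =>
    intro s hs ε hε
    have hst : s.card = t := by omega
    rw [hst]
    exact hoa s hst ε hε
  | succ m ih =>
    intro s hs ε hε
    have hlt : s.card < k := by omega
    have hsne : s ≠ univ := by
      intro h
      rw [h, card_univ, Fintype.card_fin] at hlt
      omega
    obtain ⟨j0, hj0⟩ : ∃ j0, j0 ∉ s := by
      by_contra h
      push_neg at h
      exact hsne (eq_univ_iff_forall.mpr h)
    set ε1 := Function.update ε j0 (1 : ℤ) with hε1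
    set ε2 := Function.update ε j0 (-1 : ℤ) with hε2
    have hε1v : ∀ j, ε1 j = 1 ∨ ε1 j = -1 := by
      intro j
      by_cases hj : j = j0
      · subst hj; left; simp [hε1]
      · rw [hε1, Function.update_of_ne hj]; exact hε j
    have hε2v : ∀ j, ε2 j = 1 ∨ ε2 j = -1 := by
      intro j
      by_cases hj : j = j0
      · subst hj; right; simp [hε2]
      · rw [hε2, Function.update_of_ne hj]; exact hε j
    have hcard : (insert j0 s).card = s.card + 1 := card_insert_of_notMem hj0
    have h1 := ih (insert j0 s) (by omega) ε1 hε1v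
    have h2 := ih (insert j0 s) (by omega) ε2 hε2v
    rw [hcard] at h1 h2
    have hiff1 : ∀ i, (∀ j ∈ insert j0 s, Y i j = ε1 j) ↔
        (Y i j0 = 1 ∧ ∀ j ∈ s, Y i j = ε j) := by
      intro i
      constructor
      · intro h
        refine ⟨?_, ?_⟩
        · have := h j0 (mem_insert_self _ _); simpa [hε1] using this
        · intro j hj
          have := h j (mem_insert_of_mem hj)
          rwa [hε1, Function.update_of_ne (by rintro rfl; exact hj0 hj)] at this
      · rintro ⟨h0, h⟩ j hj
        rcases mem_insert.mp hj with rfl | hj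
        · simpa [hε1] using h0
        · rw [hε1, Function.update_of_ne (fun he => hj0 (by rw [← he]; exact hj))]; exact h j hj
    have hiff2 : ∀ i, (∀ j ∈ insert j0 s, Y i j = ε2 j) ↔
        (Y i j0 = -1 ∧ ∀ j ∈ s, Y i j = ε j) := by
      intro i
      constructor
      · intro h
        refine ⟨?_, ?_⟩
        · have := h j0 (mem_insert_self _ _); simpa [hε2] using this
        · intro j hj
          have := h j (mem_insert_of_mem hj)
          rwa [hε2, Function.update_of_ne (by rintro rfl; exact hj0 hj)] at this
      · rintro ⟨h0, h⟩ j hj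
        rcases mem_insert.mp hj with rfl | hj
        · simpa [hε2] using h0
        · rw [hε2, Function.update_of_ne (fun he => hj0 (by rw [← he]; exact hj))]; exact h j hj
    have hsplit :
        (Finset.univ.filter (fun i : Fin N => ∀ j ∈ s, Y i j = ε j)).card
        = (Finset.univ.filter (fun i : Fin N => ∀ j ∈ insert j0 s, Y i j = ε1 j)).card
          + (Finset.univ.filter (fun i : Fin N => ∀ j ∈ insert j0 s, Y i j = ε2 j)).card := by
      rw [← card_union_of_disjoint]
      · congr 1
        ext i
        simp only [mem_filter, mem_union, mem_univ, true_and, hiff1 i, hiff2 i]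
        rcases hpm i j0 with h | h <;> constructor <;> intro hh
        · exact Or.inl ⟨h, hh⟩
        · rcases hh with ⟨_, hh⟩ | ⟨_, hh⟩ <;> exact hh
        · exact Or.inr ⟨h, hh⟩
        · rcases hh with ⟨_, hh⟩ | ⟨_, hh⟩ <;> exact hh
      · rw [Finset.disjoint_left]
        intro i hi1 hi2
        simp only [mem_filter, hiff1 i, hiff2 i] at hi1 hi2
        have := hi1.2.1
        rw [hi2.2.1] at this
        norm_num at this
    rw [hsplit]
    have : ((Finset.univ.filter (fun i : Fin N => ∀ j ∈ insert j0 s, Y i j = ε1 j)).card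
          + (Finset.univ.filter (fun i : Fin N => ∀ j ∈ insert j0 s, Y i j = ε2 j)).card)
          * 2 ^ s.card * 2 = N * 2 := by
      rw [add_mul, add_mul]
      have e : ∀ c : ℕ, c * 2 ^ s.card * 2 = c * 2 ^ (s.card + 1) := by
        intro c; ring
      rw [e, e, h1, h2]
      omega
    omega

/-- Key identity: `∑_{s ⊆ l} J(s) = 2^{|l|} · #{rows all-ones on l}`. -/
lemma sumJ {N k : ℕ} (Y : Fin N → Fin k → ℤ) (hpm : isPM Y) (l : Finset (Fin k)) :
    ∑ s ∈ l.powerset, Jchar Y s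
      = ((Finset.univ.filter (fun i : Fin N => ∀ j ∈ l, Y i j = 1)).card : ℤ)
          * 2 ^ l.card := by
  unfold Jchar
  rw [Finset.sum_comm]
  have hrow : ∀ i : Fin N, ∑ s ∈ l.powerset, ∏ j ∈ s, Y i j
      = if (∀ j ∈ l, Y i j = 1) then (2 : ℤ) ^ l.card else 0 := by
    intro i
    have hp : ∑ s ∈ l.powerset, ∏ j ∈ s, Y i j = ∏ j ∈ l, (Y i j + 1) := by
      rw [Finset.prod_add]
      apply Finset.sum_congr rfl
      intro s hs
      simp
    rw [hp]
    by_cases h : ∀ j ∈ l, Y i j = 1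
    · rw [if_pos h]
      rw [Finset.prod_congr rfl (fun j hj => by rw [h j hj])]
      simp
    · rw [if_neg h]
      push_neg at h
      obtain ⟨j0, hj0, hne⟩ := h
      apply Finset.prod_eq_zero hj0
      rcases hpm i j0 with h | h
      · exact absurd h hne
      · rw [h]; ring
  rw [Finset.sum_congr rfl (fun i _ => hrow i), Finset.sum_ite, Finset.sum_const,
    Finset.sum_const_zero, add_zero, nsmul_eq_mul]

theorem stmt1 (N k t lam : ℕ) (Y : Fin N → Fin k → ℤ)
    (hpm : isPM Y) (hoa : isOA2 N k t Y)
    (ht1 : 1 ≤ t) (htk : t ≤ k) (hN : N = lam * 2 ^ t) (hk : t + 2 ≤ k) :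
    ∀ l : Finset (Fin k), l.Nonempty → ∃ μ : ℤ, Jchar Y l = μ * 2 ^ t := by
  have key : ∀ n, ∀ l : Finset (Fin k), l.card = n → l.Nonempty →
      (2 : ℤ) ^ t ∣ Jchar Y l := by
    intro n
    induction n using Nat.strong_induction_on with
    | _ n ih =>
      intro l hcard hne
      have hid := sumJ Y hpm l
      have hsplit : ∑ s ∈ l.powerset, Jchar Y s
          = Jchar Y l + ∑ s ∈ l.powerset.erase l, Jchar Y s :=
        (Finset.add_sum_erase _ _ (Finset.mem_powerset_self l)).symm
      have hJl : Jchar Y l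
          = ((Finset.univ.filter (fun i : Fin N => ∀ j ∈ l, Y i j = 1)).card : ℤ)
              * 2 ^ l.card - ∑ s ∈ l.powerset.erase l, Jchar Y s := by
        rw [← hid, hsplit]; ring
      rw [hJl]
      apply dvd_sub
      · -- divisibility of the main term
        by_cases hle : l.card ≤ t
        · have hc := countA Y hpm hoa htk (t - l.card) l (by omega) (fun _ => 1)
            (fun _ => Or.inl rfl)
          have : ((Finset.univ.filter (fun i : Fin N => ∀ j ∈ l, Y i j = 1)).card : ℤ)
              * 2 ^ l.card = (N : ℤ) := by exact_mod_cast hc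
          rw [this, hN]
          push_cast
          exact dvd_mul_left _ _
        · apply Dvd.dvd.mul_left
          exact pow_dvd_pow 2 (by omega)
      · apply Finset.dvd_sum
        intro s hs
        have hsl : s ⊆ l := Finset.mem_powerset.mp (Finset.mem_of_mem_erase hs)
        have hsne : s ≠ l := Finset.ne_of_mem_erase hs
        have hslt : s.card < l.card := Finset.card_lt_card (lt_of_le_of_ne hsl hsne)
        rcases Finset.eq_empty_or_nonempty s with rfl | hsne'
        · have : Jchar Y (∅ : Finset (Fin k)) = (N : ℤ) := by
            unfold Jchar; simp
          rw [this, hN]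
          push_cast
          exact dvd_mul_left _ _
        · exact ih s.card (by omega) s rfl hsne'
  intro l hne
  obtain ⟨μ, hμ⟩ := key l.card l rfl hne
  exact ⟨μ, by rw [hμ]; ring⟩
end

section
/- Let Y be a two-level ±1 design that is an OA(N,k,2,t) with N = λ·2^t, k ≥ t + 2, and λ odd. Then for every nonempty subset l ⊆ Fin k, the integer J(l)/2^t is odd if the binomial coefficient C(|l|−1, |l|−t−1) is odd, and is even otherwise; that is, J(l)/2^t ≡ C(|l|−1, |l|−t−1) (mod 2), where C(|l|−1, |l|−t−1) is interpreted as 0 when |l| ≤ t. -/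
open Finset

lemma forall_mem_insert_eq_update {α β : Type*} [DecidableEq α] {S : Finset α} {a : α}
    (ha : a ∉ S) (f ε : α → β) (b : β) :
    (∀ x ∈ insert a S, f x = Function.update ε a b x) ↔
      f a = b ∧ ∀ x ∈ S, f x = ε x := by
  rw [forall_mem_insert, Function.update_self]
  refine and_congr_right fun _ => forall₂_congr fun x hx => ?_
  rw [Function.update_of_ne (ne_of_mem_of_not_mem hx ha)]

section
variable {N k : ℕ} {Y : Fin N → Fin k → ℤ}

lemma isOA2_of_succ {s : ℕ} (hpm : isPM Y) (hsk : s < k) (hoa : isOA2 N k (s + 1) Y) :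
    isOA2 N k s Y := by
  intro S hS ε hε
  obtain ⟨j, -, hj⟩ := exists_mem_notMem_of_card_lt_card (s := S) (t := univ)
    (by rw [hS, card_univ, Fintype.card_fin]; exact hsk)
  have hcount (v : ℤ) (hv : v = 1 ∨ v = -1) :
      #{i | Y i j = v ∧ ∀ j' ∈ S, Y i j' = ε j'} * 2 ^ (s + 1) = N := by
    have hε' : ∀ x, Function.update ε j v x = 1 ∨ Function.update ε j v x = -1 := by
      intro x
      rcases eq_or_ne x j with rfl | hx
      · simpa using hv
      · simpa [Function.update_of_ne hx] using hε x
    simpa only [forall_mem_insert_eq_update hj] using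
      hoa (insert j S) (by rw [card_insert_of_notMem hj, hS]) _ hε'
  have hsplit : #{i | ∀ j' ∈ S, Y i j' = ε j'}
      = #{i | Y i j = 1 ∧ ∀ j' ∈ S, Y i j' = ε j'}
        + #{i | Y i j = -1 ∧ ∀ j' ∈ S, Y i j' = ε j'} := by
    rw [← card_union_of_disjoint]
    · congr 1
      ext i
      simp only [mem_filter, mem_univ, true_and, mem_union]
      rcases hpm i j with h | h <;> simp [h]
    · rw [disjoint_filter]
      intro i _ h1 h2
      have := h1.1.symm.trans h2.1
      norm_num at this
  have h1 := hcount 1 (.inl rfl)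
  have h2 := hcount (-1) (.inr rfl)
  rw [pow_succ] at h1 h2
  rw [hsplit]
  linarith

lemma isOA2_of_le {s t : ℕ} (hpm : isPM Y) (hst : s ≤ t) (htk : t ≤ k) (hoa : isOA2 N k t Y) :
    isOA2 N k s Y := by
  induction hst using Nat.decreasingInduction with
  | self => exact hoa
  | of_succ r hrt ih => exact isOA2_of_succ hpm (by omega) ih

lemma Jchar_eq_sum_powerset (hpm : isPM Y) (l : Finset (Fin k)) :
    Jchar Y l = ∑ S ∈ l.powerset, (-2 : ℤ) ^ #S * #{i | ∀ j ∈ S, Y i j = -1} := by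
  have hrow (i : Fin N) (S : Finset (Fin k)) :
      ∏ j ∈ S, (Y i j - 1) = if ∀ j ∈ S, Y i j = -1 then (-2) ^ #S else 0 := by
    split_ifs with h
    · rw [← prod_const]
      exact prod_congr rfl fun j hj => by rw [h j hj]; norm_num
    · obtain ⟨j, hj, hj1⟩ := not_forall₂.mp h
      exact prod_eq_zero hj (by rw [(hpm i j).resolve_right hj1]; norm_num)
  calc Jchar Y l = ∑ i, ∏ j ∈ l, ((Y i j - 1) + 1) := by simp only [Jchar, sub_add_cancel]
    _ = ∑ S ∈ l.powerset, ∑ i, ∏ j ∈ S, (Y i j - 1) := by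
      simp only [prod_add_one]; exact sum_comm
    _ = _ := by
      simp only [hrow, sum_ite, sum_const_zero, add_zero, sum_const, nsmul_eq_mul]
      exact sum_congr rfl fun S _ => mul_comm _ _

end

lemma sum_powerset_card_le_neg_one_pow {α : Type*} {l : Finset α} (hl : l.Nonempty) (t : ℕ) :
    ∑ S ∈ l.powerset with #S ≤ t, (-1 : ℤ) ^ #S = (-1) ^ t * (#l - 1).choose t := by
  obtain ⟨c, hc⟩ : ∃ c, #l = c + 1 := Nat.exists_eq_succ_of_ne_zero hl.card_ne_zero
  rw [sum_filter, sum_powerset_apply_card (fun m => if m ≤ t then (-1 : ℤ) ^ m else 0), hc,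
    Nat.add_sub_cancel, ← Int.alternating_sum_range_choose_eq_choose]
  simp only [smul_ite, smul_zero, ← sum_filter, nsmul_eq_mul, mul_comm _ ((-1 : ℤ) ^ _)]
  refine sum_subset (fun m => by simp only [mem_filter, mem_range]; omega) fun m hm hm' => ?_
  simp only [mem_filter, mem_range, not_and, not_le] at hm hm'
  rw [Nat.choose_eq_zero_of_lt (by omega), Nat.cast_zero, mul_zero]

lemma Jchar_eq_two_pow_mul {N k t lam : ℕ} {Y : Fin N → Fin k → ℤ} (hpm : isPM Y)
    (hoa : isOA2 N k t Y) (htk : t ≤ k) (hN : N = lam * 2 ^ t) {l : Finset (Fin k)}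
    (hl : l.Nonempty) :
    ∃ R : ℤ, Jchar Y l = 2 ^ t * (lam * (-1) ^ t * (#l - 1).choose t + 2 * R) := by
  have hlow : ∑ S ∈ l.powerset with #S ≤ t, (-2 : ℤ) ^ #S * #{i | ∀ j ∈ S, Y i j = -1}
      = 2 ^ t * (lam * (-1) ^ t * (#l - 1).choose t) := by
    rw [mul_assoc, ← sum_powerset_card_le_neg_one_pow hl t, mul_sum, mul_sum]
    refine sum_congr rfl fun S hS => ?_
    have hcount := isOA2_of_le hpm (mem_filter.mp hS).2 htk hoa S rfl (fun _ => -1)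
      fun _ => .inr rfl
    have hcount' : (#{i | ∀ j ∈ S, Y i j = -1} : ℤ) * 2 ^ #S = lam * 2 ^ t := by
      exact_mod_cast hcount.trans hN
    rw [neg_pow]
    linear_combination (-1 : ℤ) ^ #S * hcount'
  obtain ⟨R, hR⟩ : (2 : ℤ) ^ (t + 1) ∣
      ∑ S ∈ l.powerset with ¬#S ≤ t, (-2 : ℤ) ^ #S * #{i | ∀ j ∈ S, Y i j = -1} := by
    refine dvd_sum fun S hS => Dvd.dvd.mul_right ?_ _
    rw [neg_pow]
    exact Dvd.dvd.mul_left (pow_dvd_pow 2 (by simp only [mem_filter, not_le] at hS; omega)) _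
  refine ⟨R, ?_⟩
  rw [Jchar_eq_sum_powerset hpm, ← sum_filter_add_sum_filter_not _ (fun S => #S ≤ t), hlow, hR]
  ring

theorem stmt3_general (N k t lam : ℕ) (Y : Fin N → Fin k → ℤ)
    (hpm : isPM Y) (hoa : isOA2 N k t Y)
    (htk : t ≤ k) (hN : N = lam * 2 ^ t)
    (hlam : Odd lam) :
    ∀ l : Finset (Fin k), l.Nonempty →
      ∃ μ : ℤ, Jchar Y l = μ * 2 ^ t ∧
        μ % 2 = (if t < l.card then ((l.card - 1).choose (l.card - t - 1) : ℤ)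
          else 0) % 2 := by
  intro l hl
  obtain ⟨R, hR⟩ := Jchar_eq_two_pow_mul hpm hoa htk hN hl
  refine ⟨_, hR.trans (mul_comm _ _), ?_⟩
  have hchoose :
      (if t < #l then ((#l - 1).choose (#l - t - 1) : ℤ) else 0) = (#l - 1).choose t := by
    split_ifs with h
    · rw [show #l - t - 1 = #l - 1 - t by omega, Nat.choose_symm (by omega)]
    · rw [Nat.choose_eq_zero_of_lt (by have := hl.card_pos; omega), Nat.cast_zero]
  obtain ⟨m, hm⟩ : Odd ((lam : ℤ) * (-1) ^ t) := hlam.natCast.mul (odd_neg_one.pow)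
  rw [hchoose, hm, show (2 * m + 1) * ((#l - 1).choose t : ℤ) + 2 * R
    = (#l - 1).choose t + 2 * (m * (#l - 1).choose t + R) by ring, Int.add_mul_emod_self_left]

theorem stmt3 (N k t lam : ℕ) (Y : Fin N → Fin k → ℤ)
    (hpm : isPM Y) (hoa : isOA2 N k t Y)
    (ht1 : 1 ≤ t) (htk : t ≤ k) (hN : N = lam * 2 ^ t) (hk : t + 2 ≤ k)
    (hlam : Odd lam) :
    ∀ l : Finset (Fin k), l.Nonempty →
      ∃ μ : ℤ, Jchar Y l = μ * 2 ^ t ∧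
        μ % 2 = (if t < l.card then ((l.card - 1).choose (l.card - t - 1) : ℤ)
          else 0) % 2 :=
  stmt3_general N k t lam Y hpm hoa htk hN hlam
end

section
/- Let Y be a two-level ±1 design that is an OA(N,k,2,t) with N = λ·2^t, λ odd, and k ≥ t + 2, and let j be an integer with t + 1 ≤ j ≤ k such that the binomial coefficient C(j−1, j−t−1) is odd. Then the integer S_j = Σ_{l ⊆ Fin k, |l| = j} J(l)² (which equals N²·A_j(Y)) satisfies S_j ≥ C(k,j)·2^{2t}, and S_j − C(k,j)·2^{2t} is divisible by 2^{2t+3}. -/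
-- count of rows matching ε on S equals N / 2^{|S|}, for |S| ≤ t
lemma count_pattern {N k t : ℕ} {Y : Fin N → Fin k → ℤ}
    (hpm : isPM Y) (hoa : isOA2 N k t Y) (htk : t ≤ k) :
    ∀ d (S : Finset (Fin k)), S.card + d = t → ∀ ε : Fin k → ℤ,
      (∀ j, ε j = 1 ∨ ε j = -1) →
      (Finset.univ.filter (fun i : Fin N => ∀ j ∈ S, Y i j = ε j)).card * 2 ^ S.card = N := by
  intro d
  induction d with
  | zero =>
    intro S hS ε hε
    have h : S.card = t := by omega
    rw [h]; exact hoa S h ε hε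
  | succ d ih =>
    intro S hS ε hε
    have hcard : S.card < k := by omega
    obtain ⟨c, hc⟩ : ∃ c, c ∉ S := by
      by_contra h
      push_neg at h
      have : S = Finset.univ := Finset.eq_univ_iff_forall.2 h
      rw [this, Finset.card_univ, Fintype.card_fin] at hcard
      omega
    have key : ∀ v : ℤ, v = 1 ∨ v = -1 →
        (Finset.univ.filter (fun i : Fin N =>
          (∀ j ∈ S, Y i j = ε j) ∧ Y i c = v)).card * 2 ^ (S.card + 1) = N := by
      intro v hv
      have hins : (insert c S).card + d = t := by
        rw [Finset.card_insert_of_notMem hc]; omega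
      have := ih (insert c S) hins (Function.update ε c v) (fun j => by
        by_cases h : j = c
        · subst h; rw [Function.update_self]; exact hv
        · rw [Function.update_of_ne h]; exact hε j)
      rw [Finset.card_insert_of_notMem hc] at this
      have hset : Finset.univ.filter (fun i : Fin N =>
            (∀ j ∈ S, Y i j = ε j) ∧ Y i c = v) =
          Finset.univ.filter (fun i : Fin N =>
            ∀ j ∈ insert c S, Y i j = Function.update ε c v j) := by
        ext i
        simp only [Finset.mem_filter, Finset.mem_univ, true_and]
        constructor
        · rintro ⟨h1, h2⟩ jj hjj
          rcases Finset.mem_insert.1 hjj with h | h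
          · subst h; rwa [Function.update_self]
          · have : jj ≠ c := fun he => hc (he ▸ h)
            rw [Function.update_of_ne this]; exact h1 jj h
        · intro h
          refine ⟨fun jj hjj => ?_, ?_⟩
          · have hne : jj ≠ c := fun he => hc (he ▸ hjj)
            have := h jj (Finset.mem_insert_of_mem hjj)
            rwa [Function.update_of_ne hne] at this
          · have := h c (Finset.mem_insert_self c S)
            rwa [Function.update_self] at this
      rw [hset]
      exact this
    have hsplit :
        ((Finset.univ.filter (fun i : Fin N => ∀ j ∈ S, Y i j = ε j)).card =
          (Finset.univ.filter (fun i : Fin N =>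
            (∀ j ∈ S, Y i j = ε j) ∧ Y i c = 1)).card +
          (Finset.univ.filter (fun i : Fin N =>
            (∀ j ∈ S, Y i j = ε j) ∧ Y i c = -1)).card) := by
      rw [← Finset.filter_filter, ← Finset.filter_filter]
      rw [← Finset.card_filter_add_card_filter_not
        (s := Finset.univ.filter (fun i : Fin N => ∀ j ∈ S, Y i j = ε j))
        (p := fun i => Y i c = 1)]
      congr 1
      have : Finset.filter (fun i => ¬ Y i c = 1)
            (Finset.univ.filter (fun i : Fin N => ∀ j ∈ S, Y i j = ε j)) =
          Finset.filter (fun i => Y i c = -1)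
            (Finset.univ.filter (fun i : Fin N => ∀ j ∈ S, Y i j = ε j)) := by
        apply Finset.filter_congr
        intro i _
        rcases hpm i c with h | h <;> simp [h]
      rw [this]
    have h1 := key 1 (Or.inl rfl)
    have h2 := key (-1) (Or.inr rfl)
    rw [hsplit]
    set a := (Finset.univ.filter (fun i : Fin N =>
      (∀ j ∈ S, Y i j = ε j) ∧ Y i c = 1)).card with ha
    set b := (Finset.univ.filter (fun i : Fin N =>
      (∀ j ∈ S, Y i j = ε j) ∧ Y i c = -1)).card with hb
    have h : ((a + b) * 2 ^ S.card) * 2 = N * 2 := by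
      have e1 : a * 2 ^ (S.card + 1) = N := h1
      have e2 : b * 2 ^ (S.card + 1) = N := h2
      rw [pow_succ] at e1 e2
      calc ((a + b) * 2 ^ S.card) * 2
          = a * (2 ^ S.card * 2) + b * (2 ^ S.card * 2) := by ring
        _ = N * 2 := by rw [e1, e2]; ring
    exact Nat.eq_of_mul_eq_mul_right two_pos h

-- decomposition of J via counts of all -1 patterns
lemma Jdecomp {N k : ℕ} {Y : Fin N → Fin k → ℤ} (hpm : isPM Y) (l : Finset (Fin k)) :
    Jchar Y l = ∑ S ∈ l.powerset, (-2 : ℤ) ^ S.card *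
      ((Finset.univ.filter (fun i : Fin N => ∀ j ∈ S, Y i j = -1)).card : ℤ) := by
  unfold Jchar
  have hrow : ∀ i, ∏ j ∈ l, Y i j =
      ∑ S ∈ l.powerset, (-2 : ℤ) ^ S.card *
        (if ∀ j ∈ S, Y i j = -1 then 1 else 0) := by
    intro i
    have h1 : ∀ j ∈ l, Y i j = (-2) * (if Y i j = -1 then 1 else 0) + 1 := by
      intro j _
      rcases hpm i j with h | h <;> simp [h]
    rw [Finset.prod_congr rfl h1, Finset.prod_add]
    refine Finset.sum_congr rfl fun S hS => ?_
    rw [Finset.prod_const_one, mul_one, Finset.prod_mul_distrib, Finset.prod_const,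
      Finset.prod_boole]
    congr
  rw [Finset.sum_congr rfl (fun i _ => hrow i), Finset.sum_comm]
  refine Finset.sum_congr rfl fun S _ => ?_
  rw [← Finset.mul_sum, Finset.sum_boole]

lemma alt_sum (m : ℕ) : ∀ t : ℕ,
    ∑ r ∈ Finset.range (t + 1), (-1 : ℤ) ^ r * ((m + 1).choose r : ℤ) =
      (-1) ^ t * (m.choose t : ℤ) := by
  intro t
  induction t with
  | zero => simp
  | succ t ih =>
    rw [Finset.sum_range_succ, ih, Nat.choose_succ_succ]
    push_cast
    ring

-- key lemma: each J(l), |l| = j, is 2^t times an odd number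
lemma J_odd {N k t lam j : ℕ} {Y : Fin N → Fin k → ℤ}
    (hpm : isPM Y) (hoa : isOA2 N k t Y)
    (htk : t ≤ k) (hN : N = lam * 2 ^ t) (hlam : Odd lam)
    (hj1 : t + 1 ≤ j)
    (hodd : Odd ((j - 1).choose (j - t - 1)))
    (l : Finset (Fin k)) (hl : l.card = j) :
    ∃ m : ℤ, Odd m ∧ Jchar Y l = 2 ^ t * m := by
  classical
  set F : Finset (Fin k) → ℤ := fun S => (-2 : ℤ) ^ S.card *
    ((Finset.univ.filter (fun i : Fin N => ∀ jj ∈ S, Y i jj = -1)).card : ℤ) with hF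
  have hdec : Jchar Y l = ∑ r ∈ Finset.range (j + 1), ∑ S ∈ l.powersetCard r, F S := by
    rw [Jdecomp hpm l, Finset.sum_powerset, hl]
  have hsplit : (∑ r ∈ Finset.Ico 0 (t + 1), ∑ S ∈ l.powersetCard r, F S)
      + ∑ r ∈ Finset.Ico (t + 1) (j + 1), ∑ S ∈ l.powersetCard r, F S
      = ∑ r ∈ Finset.range (j + 1), ∑ S ∈ l.powersetCard r, F S := by
    rw [Finset.range_eq_Ico]
    exact Finset.sum_Ico_consecutive _ (by omega) (by omega)
  -- low part
  have hlow : ∀ r ∈ Finset.Ico 0 (t + 1),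
      (∑ S ∈ l.powersetCard r, F S) =
        (j.choose r : ℤ) * ((-1) ^ r * (lam : ℤ) * 2 ^ t) := by
    intro r hr
    have hrt : r ≤ t := by
      simp only [Finset.mem_Ico] at hr; omega
    have hconst : ∀ S ∈ l.powersetCard r, F S = (-1) ^ r * (lam : ℤ) * 2 ^ t := by
      intro S hS
      obtain ⟨hSl, hScard⟩ := Finset.mem_powersetCard.1 hS
      have hcnt := count_pattern hpm hoa htk (t - S.card) S (by omega)
        (fun _ => -1) (fun _ => Or.inr rfl)
      have hcast : ((Finset.univ.filter
          (fun i : Fin N => ∀ jj ∈ S, Y i jj = -1)).card : ℤ) * 2 ^ S.card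
          = (lam : ℤ) * 2 ^ t := by
        have := congrArg (fun n : ℕ => (n : ℤ)) hcnt
        push_cast at this
        rw [this, hN]; push_cast; ring
      have h2 : ((Finset.univ.filter
          (fun i : Fin N => ∀ jj ∈ S, Y i jj = -1)).card : ℤ)
          = (lam : ℤ) * 2 ^ (t - S.card) := by
        have hpow : (2 : ℤ) ^ t = 2 ^ (t - S.card) * 2 ^ S.card := by
          rw [← pow_add]
          congr 1
          omega
        rw [hpow] at hcast
        have h2' : ((Finset.univ.filter
            (fun i : Fin N => ∀ jj ∈ S, Y i jj = -1)).card : ℤ) * 2 ^ S.card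
            = ((lam : ℤ) * 2 ^ (t - S.card)) * 2 ^ S.card := by
          rw [hcast]; ring
        exact mul_right_cancel₀ (by positivity) h2'
      rw [hF]
      simp only
      rw [h2, hScard]
      have hpow2 : (-2 : ℤ) ^ r = (-1) ^ r * 2 ^ r := by
        rw [← neg_one_mul, mul_pow]
      rw [hpow2]
      have hpow3 : (2 : ℤ) ^ r * 2 ^ (t - r) = 2 ^ t := by
        rw [← pow_add]; congr 1; omega
      calc (-1 : ℤ) ^ r * 2 ^ r * ((lam : ℤ) * 2 ^ (t - r))
          = (-1) ^ r * (lam : ℤ) * (2 ^ r * 2 ^ (t - r)) := by ring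
        _ = (-1) ^ r * (lam : ℤ) * 2 ^ t := by rw [hpow3]
    rw [Finset.sum_congr rfl hconst, Finset.sum_const, Finset.card_powersetCard, hl,
      nsmul_eq_mul]
  have hlowsum : (∑ r ∈ Finset.Ico 0 (t + 1), ∑ S ∈ l.powersetCard r, F S)
      = 2 ^ t * ((-1) ^ t * (lam : ℤ) * ((j - 1).choose t : ℤ)) := by
    rw [Finset.sum_congr rfl hlow]
    have hrange : Finset.Ico 0 (t + 1) = Finset.range (t + 1) := by
      rw [Finset.range_eq_Ico]
    rw [hrange]
    have hj : j - 1 + 1 = j := by omega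
    have := alt_sum (j - 1) t
    rw [hj] at this
    calc ∑ r ∈ Finset.range (t + 1), (j.choose r : ℤ) * ((-1) ^ r * (lam : ℤ) * 2 ^ t)
        = ((lam : ℤ) * 2 ^ t) * ∑ r ∈ Finset.range (t + 1), (-1 : ℤ) ^ r * (j.choose r : ℤ) := by
          rw [Finset.mul_sum]; exact Finset.sum_congr rfl fun r _ => by ring
      _ = ((lam : ℤ) * 2 ^ t) * ((-1) ^ t * ((j - 1).choose t : ℤ)) := by rw [this]
      _ = 2 ^ t * ((-1) ^ t * (lam : ℤ) * ((j - 1).choose t : ℤ)) := by ring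
  -- high part
  have hhigh : (2 : ℤ) ^ (t + 1) ∣
      ∑ r ∈ Finset.Ico (t + 1) (j + 1), ∑ S ∈ l.powersetCard r, F S := by
    refine Finset.dvd_sum fun r hr => Finset.dvd_sum fun S hS => ?_
    obtain ⟨hSl, hScard⟩ := Finset.mem_powersetCard.1 hS
    have hrt : t + 1 ≤ r := (Finset.mem_Ico.1 hr).1
    rw [hF]
    simp only
    apply dvd_mul_of_dvd_left
    rw [hScard]
    have : (-2 : ℤ) ^ r = (-2) ^ (t + 1) * (-2) ^ (r - (t + 1)) := by
      rw [← pow_add]; congr 1; omega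
    rw [this]
    apply dvd_mul_of_dvd_left
    have : (-2 : ℤ) ^ (t + 1) = (-1) ^ (t + 1) * 2 ^ (t + 1) := by
      rw [← neg_one_mul, mul_pow]
    rw [this]
    exact ⟨(-1) ^ (t + 1), by ring⟩
  obtain ⟨M, hM⟩ := hhigh
  refine ⟨(-1) ^ t * (lam : ℤ) * ((j - 1).choose t : ℤ) + 2 * M, ?_, ?_⟩
  · have hC : Odd ((j - 1).choose t) := by
      have hsym := Nat.choose_symm (n := j - 1) (k := j - t - 1) (by omega)
      have heq : j - 1 - (j - t - 1) = t := by omega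
      rw [heq] at hsym
      rwa [← hsym] at hodd
    refine Odd.add_even ?_ (even_two_mul M)
    exact Odd.mul (Odd.mul (Odd.pow ⟨-1, by ring⟩) (Int.odd_coe_nat lam |>.2 hlam))
      (Int.odd_coe_nat _ |>.2 hC)
  · rw [hdec, ← hsplit, hlowsum, hM]
    ring


theorem stmt4 (N k t lam j : ℕ) (Y : Fin N → Fin k → ℤ)
    (hpm : isPM Y) (hoa : isOA2 N k t Y)
    (ht1 : 1 ≤ t) (htk : t ≤ k) (hN : N = lam * 2 ^ t) (hlam : Odd lam)
    (hk : t + 2 ≤ k) (hj1 : t + 1 ≤ j) (hj2 : j ≤ k)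
    (hodd : Odd ((j - 1).choose (j - t - 1))) :
    (k.choose j : ℤ) * 2 ^ (2 * t) ≤
        (∑ l ∈ Finset.univ.filter (fun l : Finset (Fin k) => l.card = j),
          (Jchar Y l) ^ 2) ∧
      (2 ^ (2 * t + 3) : ℤ) ∣
        ((∑ l ∈ Finset.univ.filter (fun l : Finset (Fin k) => l.card = j),
          (Jchar Y l) ^ 2) - (k.choose j : ℤ) * 2 ^ (2 * t)) := by
  classical
  set A := Finset.univ.filter (fun l : Finset (Fin k) => l.card = j) with hA
  have hcard : A.card = k.choose j := by
    have : A = Finset.powersetCard j (Finset.univ : Finset (Fin k)) := by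
      ext s
      simp [hA, Finset.mem_powersetCard, Finset.subset_univ]
    rw [this, Finset.card_powersetCard, Finset.card_univ, Fintype.card_fin]
  have hterm : ∀ l ∈ A, (2 : ℤ) ^ (2 * t) ≤ Jchar Y l ^ 2 ∧
      (2 : ℤ) ^ (2 * t + 3) ∣ (Jchar Y l ^ 2 - 2 ^ (2 * t)) := by
    intro l hl
    have hlj : l.card = j := by
      simpa [hA] using hl
    obtain ⟨m, hm, hJ⟩ := J_odd hpm hoa htk hN hlam hj1 hodd l hlj
    obtain ⟨n, rfl⟩ := hm
    obtain ⟨c, hc⟩ := Int.even_mul_succ_self n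
    have hnn : 0 ≤ n * (n + 1) := by
      rcases le_or_gt 0 n with h | h
      · exact mul_nonneg h (by omega)
      · have h1 : n ≤ -1 := by omega
        nlinarith
    have hexp : (2 * n + 1) ^ 2 = 4 * (n * (n + 1)) + 1 := by ring
    have hge : (1 : ℤ) ≤ (2 * n + 1) ^ 2 := by
      rw [hexp]; linarith
    have hJ2 : Jchar Y l ^ 2 = 2 ^ (2 * t) * (2 * n + 1) ^ 2 := by
      rw [hJ]
      rw [mul_pow, ← pow_mul]
      ring_nf
    constructor
    · rw [hJ2]
      have h2 : (0 : ℤ) ≤ 2 ^ (2 * t) := by positivity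
      nlinarith
    · refine ⟨c, ?_⟩
      rw [hJ2, hexp]
      have hps : (2 : ℤ) ^ (2 * t + 3) = 2 ^ (2 * t) * 8 := by
        rw [pow_add]; norm_num
      rw [hps]
      have h8 : 4 * (n * (n + 1)) = 8 * c := by linarith [hc]
      linear_combination (2 : ℤ) ^ (2 * t) * h8
  constructor
  · calc (k.choose j : ℤ) * 2 ^ (2 * t)
        = ∑ _l ∈ A, (2 : ℤ) ^ (2 * t) := by
          rw [Finset.sum_const, hcard, nsmul_eq_mul]
      _ ≤ ∑ l ∈ A, Jchar Y l ^ 2 := Finset.sum_le_sum fun l hl => (hterm l hl).1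
  · have hrw : (∑ l ∈ A, Jchar Y l ^ 2) - (k.choose j : ℤ) * 2 ^ (2 * t)
        = ∑ l ∈ A, (Jchar Y l ^ 2 - 2 ^ (2 * t)) := by
      rw [Finset.sum_sub_distrib, Finset.sum_const, hcard, nsmul_eq_mul]
    rw [hrw]
    exact Finset.dvd_sum fun l hl => (hterm l hl).2
end

section
/- Let Y : Fin N → Fin k → ℤ be any two-level ±1 design and let 1 ≤ w ≤ k − 1. Then there exists a column i ∈ Fin k such that Σ_{l ⊆ Fin k ∖ {i}, |l| = w} J(l)² ≤ ((k − w)/k) · Σ_{l ⊆ Fin k, |l| = w} J(l)²; equivalently, A_w(Y(−i)) ≤ A_w(Y) − (w/k)·A_w(Y) for the design Y(−i) obtained from Y by deleting column i. -/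
theorem stmt7 (N k w : ℕ) (Y : Fin N → Fin k → ℤ) (hpm : isPM Y)
    (hw1 : 1 ≤ w) (hw2 : w ≤ k - 1) :
    ∃ i : Fin k,
      ((∑ l ∈ Finset.univ.filter (fun l : Finset (Fin k) => l.card = w ∧ i ∉ l),
          (Jchar Y l) ^ 2 : ℤ) : ℚ) ≤
        (((k : ℚ) - w) / k) *
          ((∑ l ∈ Finset.univ.filter (fun l : Finset (Fin k) => l.card = w),
            (Jchar Y l) ^ 2 : ℤ) : ℚ) := by
  have hk : 0 < k := by omega
  have hwk : w ≤ k := by omega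
  set A : Finset (Finset (Fin k)) := Finset.univ.filter (fun l => l.card = w) with hA
  set S : ℤ := ∑ l ∈ A, (Jchar Y l) ^ 2 with hS
  set F : Fin k → ℤ := fun i =>
    ∑ l ∈ Finset.univ.filter (fun l : Finset (Fin k) => l.card = w ∧ i ∉ l),
      (Jchar Y l) ^ 2 with hF
  have hsum : ∑ i : Fin k, F i = (k - w : ℕ) * S := by
    have h1 : ∀ i : Fin k, F i = ∑ l ∈ A, (if i ∉ l then (Jchar Y l)^2 else 0) := by
      intro i
      rw [hF]
      simp only [← Finset.sum_filter, hA, Finset.filter_filter]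
    rw [Finset.sum_congr rfl (fun i _ => h1 i), Finset.sum_comm, hS, Finset.mul_sum]
    refine Finset.sum_congr rfl (fun l hl => ?_)
    have hlc : l.card = w := by
      rw [hA] at hl; simpa using (Finset.mem_filter.mp hl).2
    rw [← Finset.sum_filter, Finset.sum_const]
    have hcard : (Finset.univ.filter (fun x : Fin k => x ∉ l)).card = k - w := by
      have : Finset.univ.filter (fun x : Fin k => x ∉ l) = lᶜ := by
        ext x; simp
      rw [this, Finset.card_compl, hlc, Fintype.card_fin]
    rw [hcard]
    simp [mul_comm]
  -- pigeonhole in ℚ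
  have hex : ∃ i : Fin k, (F i : ℚ) ≤ ((k - w : ℕ) : ℚ) * (S : ℚ) / k := by
    by_contra h
    push_neg at h
    have hlt : (∑ i : Fin k, (((k-w:ℕ):ℚ) * (S:ℚ) / k)) < ∑ i : Fin k, (F i : ℚ) :=
      Finset.sum_lt_sum_of_nonempty (by
        have : Nonempty (Fin k) := ⟨⟨0, hk⟩⟩
        exact Finset.univ_nonempty) (fun i _ => h i)
    rw [Finset.sum_const, Finset.card_univ, Fintype.card_fin] at hlt
    have : (k : ℚ) * (((k-w:ℕ):ℚ) * (S:ℚ) / k) = ((k-w:ℕ):ℚ) * (S:ℚ) := by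
      field_simp
    rw [nsmul_eq_mul, this] at hlt
    have hcs := congrArg (fun z : ℤ => (z : ℚ)) hsum
    push_cast at hcs
    linarith
  obtain ⟨i, hi⟩ := hex
  refine ⟨i, ?_⟩
  have hcast : (((k:ℚ) - w) / k) * (S : ℚ) = ((k-w:ℕ):ℚ) * (S:ℚ) / k := by
    rw [Nat.cast_sub hwk]; ring
  show ((F i : ℤ) : ℚ) ≤ _
  rw [hcast]
  exact hi
end

section
/- Let Y : Fin N → Fin k → ℤ be any two-level ±1 design. Then for every j with 0 ≤ j ≤ k, Σ_{l ⊆ Fin k, |l| = j} J(l)² = Σ_{i=0}^{k} P_j(i,2,k) · #{(a,b) ∈ (Fin N)² : d(a,b) = i}. Equivalently, A_j(Y) = (1/N) Σ_{i=0}^{k} P_j(i,2,k) B_i(Y). -/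
open Finset

/-- The Krawtchouk polynomial value
`P_j(x,s,k) = Σ_{i=0}^{j} (−1)^i (s−1)^{j−i} C(x,i) C(k−x, j−i)`. -/
def kraw (j x s k : ℕ) : ℤ :=
  ∑ i ∈ Finset.range (j + 1),
    (-1 : ℤ) ^ i * ((s : ℤ) - 1) ^ (j - i) * (x.choose i : ℤ) * ((k - x).choose (j - i) : ℤ)

/-- The number of columns in which rows `a` and `b` of `Y` differ. -/
def hdist {N k : ℕ} (Y : Fin N → Fin k → ℤ) (a b : Fin N) : ℕ :=
  (Finset.univ.filter (fun c : Fin k => Y a c ≠ Y b c)).card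

lemma count_lemma {k : ℕ} (D : Finset (Fin k)) (i j : ℕ) (hij : i ≤ j) :
    (((Finset.univ : Finset (Fin k)).powersetCard j |>.filter
      (fun l => (l ∩ D).card = i)).card)
      = D.card.choose i * (k - D.card).choose (j - i) := by
  have h1 : (Finset.powersetCard i D ×ˢ Finset.powersetCard (j - i) Dᶜ).card
      = D.card.choose i * (k - D.card).choose (j - i) := by
    rw [Finset.card_product, Finset.card_powersetCard, Finset.card_powersetCard,
      Finset.card_compl, Fintype.card_fin]
  rw [← h1]
  refine Finset.card_bij' (fun l _ => (l ∩ D, l \ D)) (fun p _ => p.1 ∪ p.2) ?_ ?_ ?_ ?_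
  · intro l hl
    simp only [Finset.mem_filter, Finset.mem_powersetCard] at hl
    obtain ⟨⟨-, hcard⟩, hi⟩ := hl
    simp only [Finset.mem_product, Finset.mem_powersetCard]
    refine ⟨⟨Finset.inter_subset_right, hi⟩, ?_, ?_⟩
    · intro x hx
      simp only [Finset.mem_sdiff] at hx
      simpa using hx.2
    · have := Finset.card_sdiff_add_card_inter l D
      omega
  · intro p hp
    simp only [Finset.mem_product, Finset.mem_powersetCard] at hp
    obtain ⟨⟨hA, hAc⟩, hB, hBc⟩ := hp
    have hdisj : Disjoint p.1 p.2 := by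
      refine Finset.disjoint_left.2 fun x hx hx2 => ?_
      have := hB hx2
      simp only [Finset.mem_compl] at this
      exact this (hA hx)
    simp only [Finset.mem_filter, Finset.mem_powersetCard]
    refine ⟨⟨Finset.subset_univ _, ?_⟩, ?_⟩
    · rw [Finset.card_union_of_disjoint hdisj, hAc, hBc]; omega
    · have : (p.1 ∪ p.2) ∩ D = p.1 := by
        rw [Finset.union_inter_distrib_right, Finset.inter_eq_left.2 hA]
        have : p.2 ∩ D = ∅ := by
          refine Finset.eq_empty_of_forall_notMem fun x hx => ?_
          simp only [Finset.mem_inter] at hx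
          have := hB hx.1
          simp only [Finset.mem_compl] at this
          exact this hx.2
        rw [this, Finset.union_empty]
      rw [this, hAc]
  · intro l hl
    dsimp only
    ext x
    simp only [Finset.mem_union, Finset.mem_inter, Finset.mem_sdiff]
    tauto
  · intro p hp
    simp only [Finset.mem_product, Finset.mem_powersetCard] at hp
    obtain ⟨⟨hA, hAc⟩, hB, hBc⟩ := hp
    have h2 : p.2 ∩ D = ∅ := by
      refine Finset.eq_empty_of_forall_notMem fun x hx => ?_
      simp only [Finset.mem_inter] at hx
      have := hB hx.1
      simp only [Finset.mem_compl] at this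
      exact this hx.2
    have e1 : (p.1 ∪ p.2) ∩ D = p.1 := by
      rw [Finset.union_inter_distrib_right, Finset.inter_eq_left.2 hA, h2, Finset.union_empty]
    have e2 : (p.1 ∪ p.2) \ D = p.2 := by
      rw [Finset.union_sdiff_distrib, Finset.sdiff_eq_empty_iff_subset.2 hA,
        Finset.empty_union, Finset.sdiff_eq_self_iff_disjoint.2]
      exact Finset.disjoint_left.2 fun x hx hxD => by
        have := hB hx; simp only [Finset.mem_compl] at this; exact this hxD
    rw [e1, e2]

lemma kraw_sum {k : ℕ} (D : Finset (Fin k)) (j : ℕ) :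
    (∑ l ∈ (Finset.univ : Finset (Fin k)).powersetCard j, (-1 : ℤ) ^ (l ∩ D).card)
      = kraw j D.card 2 k := by
  rw [← Finset.sum_fiberwise_of_maps_to (g := fun l => (l ∩ D).card)
    (t := Finset.range (j + 1)) (fun l hl => by
      simp only [Finset.mem_powersetCard] at hl
      exact Finset.mem_range.2 (Nat.lt_succ_of_le
        ((Finset.card_le_card Finset.inter_subset_left).trans hl.2.le)))]
  unfold kraw
  refine Finset.sum_congr rfl fun i hi => ?_
  have hij : i ≤ j := Nat.lt_succ_iff.1 (Finset.mem_range.1 hi)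
  rw [Finset.sum_congr rfl (fun l hl => by
    rw [(Finset.mem_filter.1 hl).2]), Finset.sum_const, count_lemma D i j hij]
  push_cast
  ring

lemma Jchar_sq {N k : ℕ} (Y : Fin N → Fin k → ℤ) (hpm : isPM Y) (l : Finset (Fin k)) :
    (Jchar Y l) ^ 2 = ∑ p : Fin N × Fin N,
      (-1 : ℤ) ^ ((l ∩ Finset.univ.filter (fun c : Fin k => Y p.1 c ≠ Y p.2 c)).card) := by
  rw [sq, Jchar, Fintype.sum_mul_sum, Fintype.sum_prod_type]
  refine Finset.sum_congr rfl fun a _ => Finset.sum_congr rfl fun b _ => ?_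
  rw [← Finset.prod_mul_distrib]
  have hcap : l ∩ Finset.univ.filter (fun c : Fin k => Y a c ≠ Y b c)
      = l.filter (fun c => ¬ Y a c = Y b c) := by
    ext x; simp [and_comm]
  rw [hcap]
  calc ∏ c ∈ l, Y a c * Y b c
      = ∏ c ∈ l, (if Y a c = Y b c then (1 : ℤ) else -1) := by
        refine Finset.prod_congr rfl fun c _ => ?_
        rcases hpm a c with h1 | h1 <;> rcases hpm b c with h2 | h2 <;> simp [h1, h2]
    _ = _ := by
        rw [Finset.prod_ite, Finset.prod_const_one, one_mul, Finset.prod_const]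

theorem stmt12 (N k : ℕ) (Y : Fin N → Fin k → ℤ) (hpm : isPM Y) :
    ∀ j : ℕ, j ≤ k →
      (∑ l ∈ Finset.univ.filter (fun l : Finset (Fin k) => l.card = j),
          (Jchar Y l) ^ 2) =
        ∑ i ∈ Finset.range (k + 1),
          kraw j i 2 k *
            ((Finset.univ.filter
              (fun p : Fin N × Fin N => hdist Y p.1 p.2 = i)).card : ℤ) := by
  intro j hj
  have hfilt : Finset.univ.filter (fun l : Finset (Fin k) => l.card = j)
      = (Finset.univ : Finset (Fin k)).powersetCard j := by
    ext l; simp [Finset.mem_powersetCard]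
  rw [hfilt]
  have hLHS : (∑ l ∈ (Finset.univ : Finset (Fin k)).powersetCard j, (Jchar Y l) ^ 2)
      = ∑ p : Fin N × Fin N, kraw j (hdist Y p.1 p.2) 2 k := by
    simp_rw [Jchar_sq Y hpm]
    rw [Finset.sum_comm]
    refine Finset.sum_congr rfl fun p _ => ?_
    exact kraw_sum _ j
  rw [hLHS]
  rw [← Finset.sum_fiberwise_of_maps_to (g := fun p : Fin N × Fin N => hdist Y p.1 p.2)
    (t := Finset.range (k + 1)) (fun p _ => Finset.mem_range.2 (Nat.lt_succ_of_le (by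
      have : hdist Y p.1 p.2 ≤ Fintype.card (Fin k) := by
        exact (Finset.card_filter_le _ _).trans (by simp)
      simpa using this)))]
  refine Finset.sum_congr rfl fun i _ => ?_
  rw [Finset.sum_congr rfl (fun p hp => by rw [(Finset.mem_filter.1 hp).2]),
    Finset.sum_const, nsmul_eq_mul, mul_comm]
end

section
/- Let Y : Fin N → Fin k → ℤ be any two-level ±1 design. Then for every j with 0 ≤ j ≤ k, 2^k · #{(a,b) ∈ (Fin N)² : d(a,b) = j} = Σ_{i=0}^{k} P_j(i,2,k) · Σ_{l ⊆ Fin k, |l| = i} J(l)². Equivalently, B_j(Y) = N·2^{−k} Σ_{i=0}^{k} P_j(i,2,k) A_i(Y). -/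
namespace Stmt13Aux

open Finset
open scoped symmDiff

variable {k : ℕ}

/-- sign character of a set `S`. -/
def chi (S : Finset (Fin k)) (c : Fin k) : ℤ := if c ∈ S then -1 else 1

lemma chi_prod (l S : Finset (Fin k)) :
    ∏ c ∈ l, chi S c = (-1 : ℤ) ^ ((l ∩ S).card) := by
  unfold chi
  rw [Finset.prod_ite_mem, Finset.prod_const]

lemma chi_mul (T D : Finset (Fin k)) (c : Fin k) :
    chi T c * chi D c = chi (T ∆ D) c := by
  unfold chi
  by_cases hT : c ∈ T <;> by_cases hD : c ∈ D <;>
    simp [hT, hD, Finset.mem_symmDiff]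

lemma sum_chi (E : Finset (Fin k)) :
    ∑ l : Finset (Fin k), ∏ c ∈ l, chi E c = if E = ∅ then (2 : ℤ) ^ k else 0 := by
  have h : ∑ l ∈ (Finset.univ : Finset (Fin k)).powerset,
        (∏ c ∈ l, chi E c) * ∏ c ∈ Finset.univ \ l, (1 : ℤ)
      = ∏ c : Fin k, (chi E c + 1) := (Finset.prod_add _ _ _).symm
  simp only [Finset.prod_const_one, mul_one, Finset.powerset_univ] at h
  rw [h]
  by_cases hE : E = ∅
  · rw [if_pos hE]
    have h2 : ∀ c : Fin k, chi E c + 1 = 2 := by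
      intro c
      simp [chi, hE]
    rw [Finset.prod_congr rfl (fun c _ => h2 c), Finset.prod_const, Finset.card_univ,
      Fintype.card_fin]
  · obtain ⟨e, he⟩ := Finset.nonempty_iff_ne_empty.2 hE
    rw [if_neg hE]
    apply Finset.prod_eq_zero (Finset.mem_univ e)
    simp [chi, he]

lemma sum_chi' (E : Finset (Fin k)) :
    ∑ l : Finset (Fin k), (-1 : ℤ) ^ ((l ∩ E).card) = if E = ∅ then (2 : ℤ) ^ k else 0 := by
  rw [← sum_chi E]; exact Finset.sum_congr rfl fun l _ => (chi_prod l E).symm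

lemma sum_sign (j : ℕ) (D : Finset (Fin k)) :
    ∑ T ∈ Finset.univ.filter (fun T : Finset (Fin k) => T.card = j),
      (-1 : ℤ) ^ ((T ∩ D).card) = kraw j D.card 2 k := by
  classical
  set x := D.card with hx
  have hinv : ∀ p : Finset (Fin k) × Finset (Fin k),
      p ∈ (D.powerset ×ˢ Dᶜ.powerset).filter (fun p => p.1.card + p.2.card = j) →
      (p.1 ∪ p.2) ∩ D = p.1 ∧ (p.1 ∪ p.2) \ D = p.2 ∧ Disjoint p.1 p.2 := by
    intro p hp
    simp only [Finset.mem_filter, Finset.mem_product, Finset.mem_powerset] at hp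
    obtain ⟨⟨h1, h2⟩, _⟩ := hp
    have h2' : ∀ c ∈ p.2, c ∉ D := by
      intro c hc
      have := h2 hc
      simpa using this
    refine ⟨?_, ?_, ?_⟩
    · ext c
      simp only [Finset.mem_inter, Finset.mem_union]
      constructor
      · rintro ⟨hc1 | hc2, hcD⟩
        · exact hc1
        · exact absurd hcD (h2' c hc2)
      · intro hc; exact ⟨Or.inl hc, h1 hc⟩
    · ext c
      simp only [Finset.mem_sdiff, Finset.mem_union]
      constructor
      · rintro ⟨hc1 | hc2, hcD⟩
        · exact absurd (h1 hc1) hcD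
        · exact hc2
      · intro hc; exact ⟨Or.inr hc, h2' c hc⟩
    · rw [Finset.disjoint_left]
      intro c hc1 hc2
      exact h2' c hc2 (h1 hc1)
  have hbij : ∑ T ∈ Finset.univ.filter (fun T : Finset (Fin k) => T.card = j),
        (-1 : ℤ) ^ ((T ∩ D).card)
      = ∑ p ∈ (D.powerset ×ˢ Dᶜ.powerset).filter (fun p => p.1.card + p.2.card = j),
          (-1 : ℤ) ^ (p.1.card) := by
    apply Finset.sum_nbij' (fun T => (T ∩ D, T \ D)) (fun p => p.1 ∪ p.2)
    · intro T hT
      simp only [Finset.mem_filter, Finset.mem_univ, true_and] at hT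
      simp only [Finset.mem_filter, Finset.mem_product, Finset.mem_powerset]
      refine ⟨⟨Finset.inter_subset_right, ?_⟩, ?_⟩
      · intro c hc
        simp only [Finset.mem_sdiff] at hc
        simp [hc.2]
      · rw [Finset.card_inter_add_card_sdiff, hT]
    · intro p hp
      obtain ⟨_, _, hd⟩ := hinv p hp
      simp only [Finset.mem_filter, Finset.mem_product, Finset.mem_powerset] at hp
      simp only [Finset.mem_filter, Finset.mem_univ, true_and]
      rw [Finset.card_union_of_disjoint hd]
      exact hp.2
    · intro T _
      ext c <;> simp only [Finset.mem_union, Finset.mem_inter, Finset.mem_sdiff] <;> tauto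
    · intro p hp
      obtain ⟨e1, e2, _⟩ := hinv p hp
      simp only [e1, e2]
    · intro T _
      rfl
  rw [hbij, Finset.sum_filter, Finset.sum_product]
  have hinner : ∀ A : Finset (Fin k),
      (∑ B ∈ Dᶜ.powerset, if A.card + B.card = j then ((-1 : ℤ)) ^ A.card else 0)
        = (-1 : ℤ) ^ A.card *
            (if A.card ≤ j then (((k - x).choose (j - A.card) : ℕ) : ℤ) else 0) := by
    intro A
    by_cases hA : A.card ≤ j
    · rw [if_pos hA]
      have hcond : ∀ B : Finset (Fin k), (A.card + B.card = j) = (B.card = j - A.card) := by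
        intro B
        apply propext
        omega
      simp only [hcond]
      rw [← Finset.sum_filter,
        show (Dᶜ.powerset.filter fun B : Finset (Fin k) => B.card = j - A.card)
            = Finset.powersetCard (j - A.card) Dᶜ from Finset.powersetCard_eq_filter.symm,
        Finset.sum_const, Finset.card_powersetCard, Finset.card_compl, Fintype.card_fin,
        nsmul_eq_mul, mul_comm, hx]
    · rw [if_neg hA, mul_zero]
      apply Finset.sum_eq_zero
      intro B _
      rw [if_neg]
      omega
  simp only [hinner]
  rw [Finset.sum_powerset]
  have hfib : ∀ i ∈ Finset.range (x + 1),
      (∑ A ∈ Finset.powersetCard i D,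
          ((-1 : ℤ) ^ A.card * (if A.card ≤ j then (((k - x).choose (j - A.card) : ℕ) : ℤ) else 0)))
        = ((x.choose i : ℕ) : ℤ) *
            ((-1 : ℤ) ^ i * (if i ≤ j then (((k - x).choose (j - i) : ℕ) : ℤ) else 0)) := by
    intro i _
    have h1 : ∀ A ∈ Finset.powersetCard i D,
        ((-1 : ℤ) ^ A.card * (if A.card ≤ j then (((k - x).choose (j - A.card) : ℕ) : ℤ) else 0))
          = ((-1 : ℤ) ^ i * (if i ≤ j then (((k - x).choose (j - i) : ℕ) : ℤ) else 0)) := by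
      intro A hA
      rw [(Finset.mem_powersetCard.1 hA).2]
    rw [Finset.sum_congr rfl h1, Finset.sum_const, Finset.card_powersetCard, nsmul_eq_mul, hx]
  rw [Finset.sum_congr rfl hfib]
  have hterm : ∀ i : ℕ, ((x.choose i : ℕ) : ℤ) *
      ((-1 : ℤ) ^ i * (if i ≤ j then (((k - x).choose (j - i) : ℕ) : ℤ) else 0))
      = (-1 : ℤ) ^ i * (x.choose i : ℤ) *
          (if i ≤ j then (((k - x).choose (j - i) : ℕ) : ℤ) else 0) := by
    intro i; ring
  rw [Finset.sum_congr rfl (fun i _ => hterm i)]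
  have hext1 : ∑ i ∈ Finset.range (x + 1),
        ((-1 : ℤ) ^ i * (x.choose i : ℤ) * (if i ≤ j then (((k - x).choose (j - i) : ℕ) : ℤ) else 0))
      = ∑ i ∈ Finset.range (x + j + 1),
        ((-1 : ℤ) ^ i * (x.choose i : ℤ) * (if i ≤ j then (((k - x).choose (j - i) : ℕ) : ℤ) else 0)) := by
    apply Finset.sum_subset
    · intro a ha
      simp only [Finset.mem_range] at ha ⊢
      omega
    · intro a _ ha
      simp only [Finset.mem_range, not_lt] at ha
      have : x.choose a = 0 := Nat.choose_eq_zero_of_lt (by omega)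
      simp [this]
  have hext2 : kraw j x 2 k
      = ∑ i ∈ Finset.range (x + j + 1),
        ((-1 : ℤ) ^ i * (x.choose i : ℤ) * (if i ≤ j then (((k - x).choose (j - i) : ℕ) : ℤ) else 0)) := by
    unfold kraw
    have step : ∑ i ∈ Finset.range (j + 1),
        ((-1 : ℤ) ^ i * (((2 : ℕ) : ℤ) - 1) ^ (j - i) * (x.choose i : ℤ) * ((k - x).choose (j - i) : ℤ))
        = ∑ i ∈ Finset.range (j + 1),
        ((-1 : ℤ) ^ i * (x.choose i : ℤ) * (if i ≤ j then (((k - x).choose (j - i) : ℕ) : ℤ) else 0)) := by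
      apply Finset.sum_congr rfl
      intro i hi
      simp only [Finset.mem_range] at hi
      rw [if_pos (by omega : i ≤ j)]
      norm_num
    rw [step]
    apply Finset.sum_subset
    · intro a ha
      simp only [Finset.mem_range] at ha ⊢
      omega
    · intro a _ ha
      simp only [Finset.mem_range, not_lt] at ha
      rw [if_neg (by omega), mul_zero]
  rw [hext1, hext2]

end Stmt13Aux

theorem stmt13 (N k : ℕ) (Y : Fin N → Fin k → ℤ) (hpm : isPM Y) :
    ∀ j : ℕ, j ≤ k →
      (2 : ℤ) ^ k *
          ((Finset.univ.filter
            (fun p : Fin N × Fin N => hdist Y p.1 p.2 = j)).card : ℤ) =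
        ∑ i ∈ Finset.range (k + 1),
          kraw j i 2 k *
            ∑ l ∈ Finset.univ.filter (fun l : Finset (Fin k) => l.card = i),
              (Jchar Y l) ^ 2 := by
  intro j _
  classical
  open Finset Stmt13Aux in
  open scoped symmDiff in
  set Dst : Fin N × Fin N → Finset (Fin k) :=
    fun p => Finset.univ.filter (fun c => Y p.1 c ≠ Y p.2 c) with hDst
  -- Step 1 : expand the square of the J-characteristic
  have step1 : ∀ l : Finset (Fin k),
      (Jchar Y l) ^ 2 = ∑ p : Fin N × Fin N, (-1 : ℤ) ^ ((l ∩ Dst p).card) := by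
    intro l
    rw [Jchar, sq, Finset.sum_mul_sum, Fintype.sum_prod_type]
    apply Finset.sum_congr rfl
    intro a _
    apply Finset.sum_congr rfl
    intro b _
    rw [← Finset.prod_mul_distrib]
    have hc : ∀ c ∈ l, Y a c * Y b c = chi (Dst (a, b)) c := by
      intro c _
      have hmem : (c ∈ Dst (a, b)) = (Y a c ≠ Y b c) := by
        simp [hDst]
      rcases hpm a c with h1 | h1 <;> rcases hpm b c with h2 | h2 <;>
        simp [chi, hmem, h1, h2]
    rw [Finset.prod_congr rfl hc, chi_prod]
  -- key pointwise identity
  have key : ∀ l : Finset (Fin k),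
      kraw j l.card 2 k * (Jchar Y l) ^ 2
        = ∑ T ∈ Finset.univ.filter (fun T : Finset (Fin k) => T.card = j),
            ∑ p : Fin N × Fin N, (-1 : ℤ) ^ ((l ∩ (T ∆ Dst p)).card) := by
    intro l
    rw [step1 l, ← sum_sign j l, Finset.sum_mul_sum]
    apply Finset.sum_congr rfl
    intro T _
    apply Finset.sum_congr rfl
    intro p _
    rw [Finset.inter_comm T l, ← chi_prod l T, ← chi_prod l (Dst p),
      ← Finset.prod_mul_distrib, ← chi_prod l (T ∆ Dst p)]
    exact Finset.prod_congr rfl fun c _ => chi_mul T (Dst p) c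
  -- regroup RHS as a sum over all subsets
  have hRHS : (∑ i ∈ Finset.range (k + 1),
        kraw j i 2 k *
          ∑ l ∈ Finset.univ.filter (fun l : Finset (Fin k) => l.card = i), (Jchar Y l) ^ 2)
      = ∑ l : Finset (Fin k), kraw j l.card 2 k * (Jchar Y l) ^ 2 := by
    rw [← Finset.sum_fiberwise_of_maps_to
      (g := fun l : Finset (Fin k) => l.card) (t := Finset.range (k + 1))
      (fun l _ => by
        simp only [Finset.mem_range, Nat.lt_succ_iff]
        calc l.card ≤ (Finset.univ : Finset (Fin k)).card := Finset.card_le_univ l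
          _ = k := by simp)
      (fun l => kraw j l.card 2 k * (Jchar Y l) ^ 2)]
    apply Finset.sum_congr rfl
    intro i _
    rw [Finset.mul_sum]
    apply Finset.sum_congr rfl
    intro l hl
    rw [(Finset.mem_filter.1 hl).2]
  rw [hRHS, Finset.sum_congr rfl fun l _ => key l]
  rw [Finset.sum_comm]
  have hswap : ∀ T : Finset (Fin k),
      (∑ l : Finset (Fin k), ∑ p : Fin N × Fin N, (-1 : ℤ) ^ ((l ∩ (T ∆ Dst p)).card))
        = ∑ p : Fin N × Fin N, if T ∆ Dst p = ∅ then (2 : ℤ) ^ k else 0 := by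
    intro T
    rw [Finset.sum_comm]
    exact Finset.sum_congr rfl fun p _ => sum_chi' (T ∆ Dst p)
  rw [Finset.sum_congr rfl fun T _ => hswap T, Finset.sum_comm]
  have hfin : ∀ p : Fin N × Fin N,
      (∑ T ∈ Finset.univ.filter (fun T : Finset (Fin k) => T.card = j),
          if T ∆ Dst p = ∅ then (2 : ℤ) ^ k else 0)
        = if (Dst p).card = j then (2 : ℤ) ^ k else 0 := by
    intro p
    have hcond : ∀ T : Finset (Fin k), (T ∆ Dst p = ∅) = (T = Dst p) := by
      intro T
      apply propext
      exact symmDiff_eq_bot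
    simp only [hcond]
    rw [Finset.sum_ite_eq' (Finset.univ.filter fun T : Finset (Fin k) => T.card = j)
      (Dst p) (fun _ => (2 : ℤ) ^ k)]
    simp
  rw [Finset.sum_congr rfl fun p _ => hfin p]
  have : ∀ p : Fin N × Fin N, ((Dst p).card = j) = (hdist Y p.1 p.2 = j) := by
    intro p
    rfl
  simp only [this]
  rw [Finset.sum_ite, Finset.sum_const, Finset.sum_const_zero, add_zero, nsmul_eq_mul,
    mul_comm]
end

section
/- Let Y : Fin N → Fin k → ℤ be a two-level ±1 design, π : Fin N ≃ Fin N a permutation of rows, τ : Fin k ≃ Fin k a permutation of columns, and ε : Fin k → {1,−1} a choice of sign for each column, and define Y' by Y' i j = ε(j) · Y (π i) (τ j). Then the generalized word length patterns coincide: A_j(Y') = A_j(Y) for every 0 ≤ j ≤ k. -/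
/-- The generalized word length pattern entry
`A_j(Y) = (1/N²) Σ_{l ⊆ Fin k, |l| = j} J(l)²`. -/
def gwp (N k : ℕ) (Y : Fin N → Fin k → ℤ) (j : ℕ) : ℚ :=
  ((∑ l ∈ Finset.univ.filter (fun l : Finset (Fin k) => l.card = j),
    (Jchar Y l) ^ 2 : ℤ) : ℚ) / (N : ℚ) ^ 2

theorem stmt18 (N k : ℕ) (Y : Fin N → Fin k → ℤ) (hpm : isPM Y)
    (π : Fin N ≃ Fin N) (τ : Fin k ≃ Fin k)
    (ε : Fin k → ℤ) (hε : ∀ j, ε j = 1 ∨ ε j = -1) :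
    ∀ j : ℕ, j ≤ k →
      gwp N k (fun i j' => ε j' * Y (π i) (τ j')) j = gwp N k Y j := by
  intro j _
  unfold gwp
  congr 1
  have key : ∀ l : Finset (Fin k),
      (Jchar (fun i j' => ε j' * Y (π i) (τ j')) l) ^ 2
        = (Jchar Y (l.image τ)) ^ 2 := by
    intro l
    have hJ : Jchar (fun i j' => ε j' * Y (π i) (τ j')) l
        = (∏ j' ∈ l, ε j') * Jchar Y (l.image τ) := by
      unfold Jchar
      rw [Finset.mul_sum]
      refine Fintype.sum_equiv π _ _ (fun i => ?_)
      simp only []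
      rw [Finset.prod_mul_distrib, Finset.prod_image (fun a _ b _ h => τ.injective h)]
    rw [hJ, mul_pow]
    have : (∏ j' ∈ l, ε j') ^ 2 = 1 := by
      rw [← Finset.prod_pow]
      refine Finset.prod_eq_one (fun x _ => ?_)
      rcases hε x with h | h <;> rw [h] <;> norm_num
    rw [this, one_mul]
  rw [show ∀ (a b : ℤ), a = b → (a:ℚ) = (b:ℚ) from fun a b h => by rw [h]]
  rw [Finset.sum_congr rfl (fun l _ => key l)]
  refine Finset.sum_nbij' (fun l => l.image τ) (fun l => l.image τ.symm) ?_ ?_ ?_ ?_ ?_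
  · intro l hl
    simp only [Finset.mem_filter, Finset.mem_univ, true_and] at hl ⊢
    rw [Finset.card_image_of_injective _ τ.injective, hl]
  · intro l hl
    simp only [Finset.mem_filter, Finset.mem_univ, true_and] at hl ⊢
    rw [Finset.card_image_of_injective _ τ.symm.injective, hl]
  · intro l _
    simp [Finset.image_image]
  · intro l _
    simp [Finset.image_image]
  · intro l _
    rfl
end

section
/- Let Y be a two-level ±1 design that is an OA(N,k,2,t) with k ≥ t + 1 and N = λ·2^t with λ odd. Then for every subset l ⊆ Fin k with |l| = t + 1, the J-characteristic satisfies |J(l)| ≥ 2^t. Consequently N²·A_{t+1}(Y) = Σ_{|l| = t+1} J(l)² ≥ C(k, t+1) · 2^{2t}. -/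
/-- The product of `(1 + Y i j)` over a set of columns. -/
lemma prod_one_add_aux {N k : ℕ} (Y : Fin N → Fin k → ℤ) (hpm : isPM Y) (i : Fin N)
    (S : Finset (Fin k)) :
    ∏ j ∈ S, (1 + Y i j) = if ∀ j ∈ S, Y i j = 1 then 2 ^ S.card else 0 := by
  induction S using Finset.induction with
  | empty => simp
  | @insert a S ha ih =>
      rw [Finset.prod_insert ha, ih, Finset.card_insert_of_notMem ha]
      rcases hpm i a with h | h
      · simp only [Finset.forall_mem_insert, h, true_and]
        split
        · rw [pow_succ]; ring
        · ring
      · have hno : ¬ (∀ j ∈ insert a S, Y i j = 1) := by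
          intro hall
          have := hall a (Finset.mem_insert_self a S)
          rw [h] at this; norm_num at this
        rw [if_neg hno, h]
        norm_num

/-- Expansion of the product over subsets. -/
lemma sum_prod_one_add {N k : ℕ} (Y : Fin N → Fin k → ℤ) (S : Finset (Fin k)) :
    ∑ i : Fin N, ∏ j ∈ S, (1 + Y i j) = ∑ S' ∈ S.powerset, Jchar Y S' := by
  have h : ∀ i : Fin N, ∏ j ∈ S, (1 + Y i j) = ∑ S' ∈ S.powerset, ∏ j ∈ S', Y i j := by
    intro i
    have := Finset.prod_add (fun j => Y i j) (fun _ => (1 : ℤ)) S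
    simpa [add_comm] using this
  simp only [h, Jchar]
  rw [Finset.sum_comm]

/-- Strength `t` implies strength `s` for `s ≤ t` (counting form). -/
lemma count_aux {N k t : ℕ} (Y : Fin N → Fin k → ℤ) (hpm : isPM Y) (hoa : isOA2 N k t Y)
    (htk : t ≤ k) :
    ∀ d (S : Finset (Fin k)) (ε : Fin k → ℤ), S.card + d = t →
      (∀ j, ε j = 1 ∨ ε j = -1) →
      (Finset.univ.filter (fun i : Fin N => ∀ j ∈ S, Y i j = ε j)).card * 2 ^ S.card = N := by
  intro d
  induction d with
  | zero =>
      intro S ε hcard hε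
      rw [show S.card = t by omega]
      exact hoa S (by omega) ε hε
  | succ d ih =>
      intro S ε hcard hε
      -- find a column not in S
      have hlt : S.card < k := by omega
      have hne : S ≠ Finset.univ := by
        intro h
        rw [h, Finset.card_univ, Fintype.card_fin] at hlt
        omega
      obtain ⟨j0, -, hj0S⟩ :=
        Finset.exists_of_ssubset (Finset.ssubset_univ_iff.mpr hne)
      set ε1 := Function.update ε j0 1 with hε1
      set ε2 := Function.update ε j0 (-1) with hε2
      have hε1pm : ∀ j, ε1 j = 1 ∨ ε1 j = -1 := by
        intro j
        by_cases hj : j = j0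
        · subst hj; left; simp [hε1]
        · rw [hε1, Function.update_of_ne hj]; exact hε j
      have hε2pm : ∀ j, ε2 j = 1 ∨ ε2 j = -1 := by
        intro j
        by_cases hj : j = j0
        · subst hj; right; simp [hε2]
        · rw [hε2, Function.update_of_ne hj]; exact hε j
      have hc : (insert j0 S).card + d = t := by
        rw [Finset.card_insert_of_notMem hj0S]; omega
      have h1 := ih (insert j0 S) ε1 hc hε1pm
      have h2 := ih (insert j0 S) ε2 hc hε2pm
      -- the two filtered sets partition the original filtered set
      have e1 : (Finset.univ.filter (fun i : Fin N => ∀ j ∈ insert j0 S, Y i j = ε1 j)) =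
          ((Finset.univ.filter (fun i : Fin N => ∀ j ∈ S, Y i j = ε j)).filter
            (fun i => Y i j0 = 1)) := by
        rw [Finset.filter_filter]
        apply Finset.filter_congr
        intro i _
        simp only [Finset.forall_mem_insert, hε1, Function.update_self]
        constructor
        · rintro ⟨h0, hS⟩
          refine ⟨fun j hj => ?_, h0⟩
          have := hS j hj
          rwa [Function.update_of_ne (by rintro rfl; exact hj0S hj)] at this
        · rintro ⟨hS, h0⟩
          refine ⟨h0, fun j hj => ?_⟩
          rw [Function.update_of_ne (by rintro rfl; exact hj0S hj)]
          exact hS j hj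
      have e2 : (Finset.univ.filter (fun i : Fin N => ∀ j ∈ insert j0 S, Y i j = ε2 j)) =
          ((Finset.univ.filter (fun i : Fin N => ∀ j ∈ S, Y i j = ε j)).filter
            (fun i => ¬ (Y i j0 = 1))) := by
        rw [Finset.filter_filter]
        apply Finset.filter_congr
        intro i _
        simp only [Finset.forall_mem_insert, hε2, Function.update_self]
        constructor
        · rintro ⟨h0, hS⟩
          refine ⟨fun j hj => ?_, by rw [h0]; norm_num⟩
          have := hS j hj
          rwa [Function.update_of_ne (by rintro rfl; exact hj0S hj)] at this
        · rintro ⟨hS, h0⟩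
          refine ⟨?_, fun j hj => ?_⟩
          · rcases hpm i j0 with h | h
            · exact absurd h h0
            · exact h
          · rw [Function.update_of_ne (by rintro rfl; exact hj0S hj)]
            exact hS j hj
      have hsplit :
          (Finset.univ.filter (fun i : Fin N => ∀ j ∈ insert j0 S, Y i j = ε1 j)).card +
          (Finset.univ.filter (fun i : Fin N => ∀ j ∈ insert j0 S, Y i j = ε2 j)).card =
          (Finset.univ.filter (fun i : Fin N => ∀ j ∈ S, Y i j = ε j)).card := by
        rw [e1, e2]
        exact Finset.card_filter_add_card_filter_not (fun i => Y i j0 = 1)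
      rw [Finset.card_insert_of_notMem hj0S, pow_succ] at h1 h2
      have h3 : ((Finset.univ.filter (fun i : Fin N => ∀ j ∈ S, Y i j = ε j)).card
          * 2 ^ S.card) * 2 = N * 2 := by
        rw [← hsplit, add_mul, add_mul, mul_assoc, mul_assoc, h1, h2]; omega
      exact Nat.eq_of_mul_eq_mul_right (by norm_num) h3

/-- `J(S) = 0` for nonempty `S` with `|S| ≤ t`. -/
lemma Jchar_eq_zero {N k t : ℕ} (Y : Fin N → Fin k → ℤ) (hpm : isPM Y) (hoa : isOA2 N k t Y)
    (htk : t ≤ k) :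
    ∀ S : Finset (Fin k), S.card ≤ t → S ≠ ∅ → Jchar Y S = 0 := by
  intro S
  induction S using Finset.strongInduction with
  | _ S ih =>
    intro hcard hne
    have key : ∑ i : Fin N, ∏ j ∈ S, (1 + Y i j) = (N : ℤ) := by
      have hall : ∀ i : Fin N, ∏ j ∈ S, (1 + Y i j) =
          if ∀ j ∈ S, Y i j = (fun _ => (1:ℤ)) j then (2:ℤ) ^ S.card else 0 :=
        fun i => prod_one_add_aux Y hpm i S
      simp only [hall]
      rw [Finset.sum_ite, Finset.sum_const, Finset.sum_const_zero, add_zero, nsmul_eq_mul]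
      have hcnt := count_aux Y hpm hoa htk (t - S.card) S (fun _ => 1) (by omega)
        (fun _ => Or.inl rfl)
      exact_mod_cast hcnt
    rw [sum_prod_one_add] at key
    have hsplit : ∑ S' ∈ S.powerset, Jchar Y S' =
        Jchar Y S + ∑ S' ∈ S.powerset.erase S, Jchar Y S' := by
      rw [Finset.add_sum_erase _ _ (Finset.mem_powerset_self S)]
    have hrest : ∑ S' ∈ S.powerset.erase S, Jchar Y S' = (N : ℤ) := by
      rw [Finset.sum_eq_single ∅]
      · simp [Jchar]
      · intro S' hS' hS'ne
        have hmem := Finset.mem_powerset.mp (Finset.mem_of_mem_erase hS')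
        have hneS : S' ≠ S := Finset.ne_of_mem_erase hS'
        have hss : S' ⊂ S := lt_of_le_of_ne hmem hneS
        exact ih S' hss (le_trans (le_of_lt (Finset.card_lt_card hss)) hcard) hS'ne
      · intro h
        exact absurd (Finset.mem_erase.mpr ⟨Ne.symm hne, Finset.empty_mem_powerset S⟩) h
    rw [hsplit, hrest] at key
    linarith

theorem stmt19 (N k t lam : ℕ) (Y : Fin N → Fin k → ℤ)
    (hpm : isPM Y) (hoa : isOA2 N k t Y)
    (ht1 : 1 ≤ t) (htk : t ≤ k) (hk : t + 1 ≤ k)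
    (hN : N = lam * 2 ^ t) (hlam : Odd lam) :
    (∀ l : Finset (Fin k), l.card = t + 1 → (2 : ℤ) ^ t ≤ |Jchar Y l|) ∧
      (k.choose (t + 1) : ℤ) * 2 ^ (2 * t) ≤
        ∑ l ∈ Finset.univ.filter (fun l : Finset (Fin k) => l.card = t + 1),
          (Jchar Y l) ^ 2 := by
  have main : ∀ l : Finset (Fin k), l.card = t + 1 → (2 : ℤ) ^ t ≤ |Jchar Y l| := by
    intro l hl
    have hlne : l ≠ ∅ := by
      intro h; rw [h, Finset.card_empty] at hl; omega
    -- the key identity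
    have key : ∑ i : Fin N, ∏ j ∈ l, (1 + Y i j) = (N : ℤ) + Jchar Y l := by
      rw [sum_prod_one_add, ← Finset.add_sum_erase _ _ (Finset.mem_powerset_self l)]
      have hrest : ∑ S' ∈ l.powerset.erase l, Jchar Y S' = (N : ℤ) := by
        rw [Finset.sum_eq_single ∅]
        · simp [Jchar]
        · intro S' hS' hS'ne
          have hmem := Finset.mem_powerset.mp (Finset.mem_of_mem_erase hS')
          have hneS : S' ≠ l := Finset.ne_of_mem_erase hS'
          have hss : S' ⊂ l := lt_of_le_of_ne hmem hneS
          have hc : S'.card < t + 1 := hl ▸ Finset.card_lt_card hss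
          exact Jchar_eq_zero Y hpm hoa htk S' (by omega) hS'ne
        · intro h
          exact absurd (Finset.mem_erase.mpr ⟨Ne.symm hlne, Finset.empty_mem_powerset l⟩) h
      rw [hrest]; ring
    -- divisibility
    have hdvd : (2 : ℤ) ^ (t + 1) ∣ ∑ i : Fin N, ∏ j ∈ l, (1 + Y i j) := by
      apply Finset.dvd_sum
      intro i _
      rw [prod_one_add_aux Y hpm i l, hl]
      split
      · exact dvd_refl _
      · exact dvd_zero _
    rw [key] at hdvd
    obtain ⟨m, hm⟩ := hdvd
    have hJ : Jchar Y l = 2 ^ t * (2 * m - (lam : ℤ)) := by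
      have hNc : (N : ℤ) = (lam : ℤ) * 2 ^ t := by exact_mod_cast hN
      rw [hNc] at hm
      have : Jchar Y l = 2 ^ (t + 1) * m - (lam : ℤ) * 2 ^ t := by linarith
      rw [this, pow_succ]; ring
    have hodd : Odd ((lam : ℤ)) := by exact_mod_cast hlam
    have hne0 : 2 * m - (lam : ℤ) ≠ 0 := by
      intro h
      have heq : (lam : ℤ) = 2 * m := by linarith
      rw [heq] at hodd
      exact (Int.not_odd_iff_even.mpr ⟨m, by ring⟩) hodd
    have h1 : (1 : ℤ) ≤ |2 * m - (lam : ℤ)| := by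
      rcases lt_or_gt_of_ne hne0 with h | h
      · rw [abs_of_neg h]; omega
      · rw [abs_of_pos h]; omega
    rw [hJ, abs_mul, abs_of_nonneg (by positivity : (0:ℤ) ≤ 2 ^ t)]
    calc (2 : ℤ) ^ t = 2 ^ t * 1 := by ring
      _ ≤ 2 ^ t * |2 * m - (lam : ℤ)| := by
          apply mul_le_mul_of_nonneg_left h1 (by positivity)
  refine ⟨main, ?_⟩
  have hcard : (Finset.univ.filter (fun l : Finset (Fin k) => l.card = t + 1)).card =
      k.choose (t + 1) := by
    rw [← Finset.powerset_univ, ← Finset.powersetCard_eq_filter, Finset.card_powersetCard,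
      Finset.card_univ, Fintype.card_fin]
  have hbd : ∀ l ∈ Finset.univ.filter (fun l : Finset (Fin k) => l.card = t + 1),
      (2 : ℤ) ^ (2 * t) ≤ (Jchar Y l) ^ 2 := by
    intro l hl
    have hlc : l.card = t + 1 := (Finset.mem_filter.mp hl).2
    have := main l hlc
    calc (2 : ℤ) ^ (2 * t) = ((2 : ℤ) ^ t) ^ 2 := by rw [← pow_mul, mul_comm]
      _ ≤ |Jchar Y l| ^ 2 := pow_le_pow_left₀ (by positivity) this 2
      _ = (Jchar Y l) ^ 2 := sq_abs _
  calc (k.choose (t + 1) : ℤ) * 2 ^ (2 * t)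
      = (Finset.univ.filter (fun l : Finset (Fin k) => l.card = t + 1)).card • ((2:ℤ) ^ (2*t)) := by
        rw [hcard, nsmul_eq_mul]
    _ ≤ ∑ l ∈ Finset.univ.filter (fun l : Finset (Fin k) => l.card = t + 1), (Jchar Y l) ^ 2 :=
        Finset.card_nsmul_le_sum _ _ _ hbd
end
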